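/- arXiv:0908.0439 — 8 statements merged into one kernel-verified Lean document; each statement's English description precedes it below -/
import Mathlib

section
/- A sofic shift is minimal if and only if it is periodic. -/
/-- The shift map on biinfinite sequences. -/
def shiftMap (X : Type*) : (ℤ → X) → (ℤ → X) := fun x i => x (i + 1)

/-- A subshift: a non-empty, closed, shift-invariant subset of `X^ℤ`. -/
def IsSubshift {X : Type*} [TopologicalSpace X] (𝒳 : Set (ℤ → X)) : Prop :=
  𝒳.Nonempty ∧ IsClosed 𝒳 ∧ shiftMap X '' 𝒳 = 𝒳

/-- The finite word `x_i x_{i+1} ⋯ x_{i+n-1}` read in the point `x`. -/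
def wordAt {X : Type*} (x : ℤ → X) (i : ℤ) (n : ℕ) : List X :=
  (List.range n).map fun k => x (i + k)

/-- The language of a subshift: the set of (non-empty) finite factors of its points. -/
def shiftLang {X : Type*} (𝒳 : Set (ℤ → X)) : Set (List X) :=
  {w | w ≠ [] ∧ ∃ x ∈ 𝒳, ∃ i : ℤ, w = wordAt x i w.length}

/-- The (two-sided) orbit of a point under the shift. -/
def shiftOrbit {X : Type*} (x : ℤ → X) : Set (ℤ → X) :=
  {y | ∃ k : ℤ, y = fun i => x (i + k)}

/-- A periodic shift: the orbit of the biinfinite repetition `⋯uuu.uuu⋯` of a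
non-empty word `u`. -/
def IsPeriodicShift {X : Type*} (𝒳 : Set (ℤ → X)) : Prop :=
  ∃ u : List X, u ≠ [] ∧ ∃ x : ℤ → X,
    (∀ i : ℤ, x (i + u.length) = x i) ∧ wordAt x 0 u.length = u ∧ 𝒳 = shiftOrbit x

/-!
By the pumping lemma, the language of a sofic shift contains all powers `b^k` of some non-empty
word `b`, so every factor of the periodic point `b^∞` lies in the language and, the shift being
closed, `b^∞` belongs to it. Its orbit is finite, hence a subshift, so minimality forces the shift
to be this orbit. Conversely, any shift-invariant non-empty subset of an orbit contains the whole
orbit.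
-/

open Function

section Words

variable {X : Type*}

theorem wordAt_eq_map_range (x : ℤ → X) (i : ℤ) (n : ℕ) :
    wordAt x i n = (List.range n).map fun k : ℕ => x (i + k) := by
  change List.map _ ((List.range n).flatMap (pure ∘ Nat.cast)) = _
  rw [List.flatMap_pure_eq_map, List.map_map]
  rfl

@[simp]
theorem length_wordAt (x : ℤ → X) (i : ℤ) (n : ℕ) : (wordAt x i n).length = n := by
  simp [wordAt_eq_map_range]

@[simp]
theorem getElem_wordAt (x : ℤ → X) (i : ℤ) (n j : ℕ) (hj : j < (wordAt x i n).length) :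
    (wordAt x i n)[j] = x (i + j) := by
  simp [wordAt_eq_map_range]

theorem wordAt_add (x : ℤ → X) (i : ℤ) (m n : ℕ) :
    wordAt x i (m + n) = wordAt x i m ++ wordAt x (i + m) n := by
  simp [wordAt_eq_map_range, List.range_add, add_assoc]

theorem wordAt_eq_wordAt_iff {x y : ℤ → X} {i j : ℤ} {n : ℕ} :
    wordAt x i n = wordAt y j n ↔ ∀ k < n, x (i + k) = y (j + k) := by
  simp [List.ext_get_iff]

theorem wordAt_isInfix_wordAt (x : ℤ → X) (i : ℤ) (a n b : ℕ) :
    wordAt x (i + a) n <:+: wordAt x i (a + n + b) :=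
  ⟨wordAt x i a, wordAt x (i + a + n) b, by rw [wordAt_add, wordAt_add, Nat.cast_add, add_assoc]⟩

end Words

section Language

variable {X : Type*} {𝒳 : Set (ℤ → X)}

theorem wordAt_mem_shiftLang {x : ℤ → X} (hx : x ∈ 𝒳) (i : ℤ) {n : ℕ} (hn : n ≠ 0) :
    wordAt x i n ∈ shiftLang 𝒳 :=
  ⟨by simpa [← List.length_eq_zero_iff] using hn, x, hx, i, by rw [length_wordAt]⟩

theorem mem_shiftLang_of_isInfix {v w : List X} (hw : w ∈ shiftLang 𝒳) (hvw : v <:+: w)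
    (hv : v ≠ []) : v ∈ shiftLang 𝒳 := by
  obtain ⟨-, x, hx, i, hxw⟩ := hw
  obtain ⟨s, t, rfl⟩ := hvw
  refine ⟨hv, x, hx, i + s.length, ?_⟩
  simp only [List.length_append, wordAt_add] at hxw
  exact (List.append_inj (List.append_inj_left' hxw (by simp)) (by simp)).2

end Language

section Shift

variable {X : Type*}

theorem shiftOrbit_subset {𝒳 : Set (ℤ → X)} (hinv : shiftMap X '' 𝒳 = 𝒳) {x : ℤ → X}
    (hx : x ∈ 𝒳) : shiftOrbit x ⊆ 𝒳 := by
  rintro _ ⟨k, rfl⟩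
  induction k using Int.induction_on with
  | zero => simpa using hx
  | succ k ih =>
    rw [← hinv]
    exact ⟨_, ih, funext fun i => congrArg x (by ring)⟩
  | pred k ih =>
    rw [← hinv] at ih
    obtain ⟨y, hy, hyx⟩ := ih
    convert hy using 1
    funext i
    have hyi : y i = x (i - 1 + -k) := by simpa [shiftMap] using congrFun hyx (i - 1)
    rw [hyi]
    exact congrArg x (by ring)

theorem shiftOrbit_subset_shiftOrbit {x y : ℤ → X} (hy : y ∈ shiftOrbit x) :
    shiftOrbit x ⊆ shiftOrbit y := by
  obtain ⟨k, rfl⟩ := hy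
  rintro _ ⟨m, rfl⟩
  exact ⟨m - k, funext fun i => congrArg x (by ring)⟩

theorem shiftMap_image_shiftOrbit (x : ℤ → X) : shiftMap X '' shiftOrbit x = shiftOrbit x := by
  ext y
  constructor
  · rintro ⟨_, ⟨k, rfl⟩, rfl⟩
    exact ⟨k + 1, funext fun i => congrArg x (by ring)⟩
  · rintro ⟨k, rfl⟩
    exact ⟨_, ⟨k - 1, rfl⟩, funext fun i => congrArg x (by ring)⟩

theorem shiftOrbit_finite_of_periodic {z : ℤ → X} {p : ℕ} (hz : Periodic z p) (hp : p ≠ 0) :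
    (shiftOrbit z).Finite := by
  refine ((Set.finite_Ico (0 : ℤ) p).image fun k i => z (i + k)).subset ?_
  rintro _ ⟨k, rfl⟩
  have hp' : (0 : ℤ) < p := by omega
  refine ⟨k % p, ⟨Int.emod_nonneg k hp'.ne', Int.emod_lt_of_pos k hp'⟩, funext fun i => ?_⟩
  simpa [add_assoc, Int.emod_add_ediv_mul] using (hz.int_mul (k / p) (i + k % p)).symm

theorem isSubshift_shiftOrbit [TopologicalSpace X] [T1Space X] {z : ℤ → X} {p : ℕ}
    (hz : Periodic z p) (hp : p ≠ 0) : IsSubshift (shiftOrbit z) :=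
  ⟨⟨z, 0, by simp⟩, (shiftOrbit_finite_of_periodic hz hp).isClosed, shiftMap_image_shiftOrbit z⟩

end Shift

section Periodic

variable {X : Type*} {z : ℤ → X} {p : ℕ}

theorem wordAt_add_int_mul (hz : Periodic z p) (i k : ℤ) (n : ℕ) :
    wordAt z (i + k * p) n = wordAt z i n :=
  wordAt_eq_wordAt_iff.2 fun j _ => by
    simpa [add_right_comm] using hz.int_mul k (i + j)

theorem wordAt_mul_eq_flatten_replicate (hz : Periodic z p) (i : ℤ) (k : ℕ) :
    wordAt z i (k * p) = (List.replicate k (wordAt z i p)).flatten := by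
  induction k with
  | zero => simp [wordAt_eq_map_range]
  | succ k ih =>
    rw [add_one_mul, wordAt_add, ih, Nat.cast_mul, wordAt_add_int_mul hz, List.replicate_succ',
      List.flatten_append, List.flatten_singleton]

theorem wordAt_mem_shiftLang_of_periodic {𝒳 : Set (ℤ → X)} (hz : Periodic z p) (hp : p ≠ 0)
    (hpow : ∀ k ≠ 0, (List.replicate k (wordAt z 0 p)).flatten ∈ shiftLang 𝒳) (i : ℤ) {n : ℕ}
    (hn : n ≠ 0) : wordAt z i n ∈ shiftLang 𝒳 := by
  set a := (i % p).toNat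
  have hp' : (0 : ℤ) < p := by omega
  have ha : (a : ℤ) = i % p := Int.toNat_of_nonneg (Int.emod_nonneg i hp'.ne')
  have hap : a < p := by have := Int.emod_lt_of_pos i hp'; omega
  have hi : wordAt z i n = wordAt z (0 + a) n := by
    rw [← Int.emod_add_ediv_mul i p, wordAt_add_int_mul hz, zero_add, ha]
  have hinfix : wordAt z (0 + a) n <:+: wordAt z 0 ((n + 1) * p) := by
    have hlen : (n + 1) * p = a + n + ((n + 1) * p - a - n) := by
      have : n ≤ n * p := Nat.le_mul_of_pos_right n (by omega)
      rw [add_one_mul]; omega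
    rw [hlen]
    exact wordAt_isInfix_wordAt z 0 a n _
  rw [hi]
  refine mem_shiftLang_of_isInfix ?_ hinfix (by simpa [← List.length_eq_zero_iff] using hn)
  rw [wordAt_mul_eq_flatten_replicate hz]
  exact hpow _ n.succ_ne_zero

/-- The point `⋯bbb.bbb⋯`, with `b` starting at coordinate `0`. -/
def periodicPoint (b : List X) (hb : b ≠ []) : ℤ → X := fun i =>
  b[(i % b.length).toNat]'(by
    have hlen : (0 : ℤ) < b.length := by simpa [List.length_pos_iff] using hb
    have := Int.emod_lt_of_pos i hlen
    have := Int.emod_nonneg i hlen.ne'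
    omega)

theorem periodicPoint_periodic (b : List X) (hb : b ≠ []) :
    Periodic (periodicPoint b hb) b.length := fun i => by
  simp [periodicPoint]

theorem wordAt_periodicPoint (b : List X) (hb : b ≠ []) :
    wordAt (periodicPoint b hb) 0 b.length = b :=
  List.ext_getElem (length_wordAt _ _ _) fun j hj _ => by
    simp_all [periodicPoint, Int.emod_eq_of_lt]

end Periodic

section Closed

variable {X : Type*} [TopologicalSpace X] {𝒳 : Set (ℤ → X)}

theorem mem_of_forall_wordAt_mem_shiftLang (hcl : IsClosed 𝒳) (hinv : shiftMap X '' 𝒳 = 𝒳)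
    {z : ℤ → X} (hz : ∀ (i : ℤ) (n : ℕ), n ≠ 0 → wordAt z i n ∈ shiftLang 𝒳) : z ∈ 𝒳 := by
  have happrox : ∀ n : ℕ, ∃ y ∈ 𝒳, ∀ j < 2 * n + 1, y (-n + j) = z (-n + j) := by
    intro n
    obtain ⟨-, x, hx, i, hxz⟩ := hz (-n) (2 * n + 1) (2 * n).succ_ne_zero
    rw [length_wordAt, wordAt_eq_wordAt_iff] at hxz
    refine ⟨fun m => x (m + (i + n)), shiftOrbit_subset hinv hx ⟨_, rfl⟩, fun j hj => ?_⟩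
    rw [hxz j hj]
    exact congrArg x (by ring)
  choose y hy𝒳 hyz using happrox
  refine hcl.mem_of_tendsto (b := Filter.atTop) (tendsto_pi_nhds.2 fun m =>
    tendsto_nhds_of_eventually_eq ?_) (.of_forall hy𝒳)
  filter_upwards [Filter.eventually_ge_atTop m.natAbs] with n hn
  simpa [Int.toNat_of_nonneg (by omega : 0 ≤ m + n)] using hyz n (m + n).toNat (by omega)

end Closed

theorem exists_flatten_replicate_mem_shiftLang {X : Type*} {𝒳 : Set (ℤ → X)} (hne : 𝒳.Nonempty)
    (hreg : Language.IsRegular (shiftLang 𝒳)) :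
    ∃ b : List X, b ≠ [] ∧ ∀ k ≠ 0, (List.replicate k b).flatten ∈ shiftLang 𝒳 := by
  obtain ⟨σ, _, M, hM⟩ := hreg
  obtain ⟨x, hx⟩ := hne
  have hw : wordAt x 0 (Fintype.card σ + 1) ∈ M.accepts :=
    hM ▸ wordAt_mem_shiftLang hx 0 (Nat.succ_ne_zero _)
  obtain ⟨a, b, c, -, -, hb, hpump⟩ := M.pumping_lemma hw (by simp)
  refine ⟨b, hb, fun k hk => mem_shiftLang_of_isInfix (w := a ++ _ ++ c) ?_ ⟨a, c, rfl⟩ ?_⟩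
  · rw [← hM]
    refine hpump (Language.mem_mul.2 ⟨_, Language.mem_mul.2 ⟨a, rfl, _, ?_, rfl⟩, c, rfl, rfl⟩)
    exact Language.join_mem_kstar fun w hw => by rw [List.eq_of_mem_replicate hw]; rfl
  · simpa [List.flatten_eq_nil_iff, List.eq_of_mem_replicate] using ⟨hk, hb⟩

theorem sofic_minimal_iff_periodic_general {X : Type*} [TopologicalSpace X]
    [DiscreteTopology X] (𝒳 : Set (ℤ → X)) (h𝒳 : IsSubshift 𝒳)
    (hsofic : Language.IsRegular (shiftLang 𝒳)) :
    (∀ 𝒴 : Set (ℤ → X), IsSubshift 𝒴 → 𝒴 ⊆ 𝒳 → 𝒴 = 𝒳) ↔ IsPeriodicShift 𝒳 := by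
  obtain ⟨hne, hcl, hinv⟩ := h𝒳
  constructor
  · intro hmin
    obtain ⟨b, hb, hpow⟩ := exists_flatten_replicate_mem_shiftLang hne hsofic
    set z := periodicPoint b hb
    have hz : Periodic z b.length := periodicPoint_periodic b hb
    have hb0 : b.length ≠ 0 := by simpa using hb
    have hz𝒳 : z ∈ 𝒳 := mem_of_forall_wordAt_mem_shiftLang hcl hinv fun i n hn =>
      wordAt_mem_shiftLang_of_periodic hz hb0 (by rwa [wordAt_periodicPoint]) i hn
    have horbit := hmin _ (isSubshift_shiftOrbit hz hb0) (shiftOrbit_subset hinv hz𝒳)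
    exact ⟨b, hb, z, hz, wordAt_periodicPoint b hb, horbit.symm⟩
  · rintro ⟨-, -, z, -, -, rfl⟩ 𝒴 ⟨⟨y, hy⟩, -, hinv𝒴⟩ h𝒴
    exact h𝒴.antisymm ((shiftOrbit_subset_shiftOrbit (h𝒴 hy)).trans (shiftOrbit_subset hinv𝒴 hy))

/-- A sofic shift is minimal (contains no proper subshift) if and only if it is periodic. -/
theorem sofic_minimal_iff_periodic {X : Type*} [Fintype X] [TopologicalSpace X]
    [DiscreteTopology X] (𝒳 : Set (ℤ → X)) (h𝒳 : IsSubshift 𝒳)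
    (hsofic : Language.IsRegular (shiftLang 𝒳)) :
    (∀ 𝒴 : Set (ℤ → X), IsSubshift 𝒴 → 𝒴 ⊆ 𝒳 → 𝒴 = 𝒳) ↔ IsPeriodicShift 𝒳 :=
  sofic_minimal_iff_periodic_general 𝒳 h𝒳 hsofic
end

section
/- Let S be a compact semigroup and let A ⊆ S be a closed, non-empty, factorial, irreducible subset. Then there is a unique J-class J(A) of S (the apex of A) that is minimal among the J-classes of S contained in A; moreover J(A) is regular and A = Fact(J(A)). -/
/-- `v` is a factor of `u`: `u ∈ S¹vS¹`. -/
def IsFactor {S : Type*} [Semigroup S] (v u : S) : Prop :=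
  u = v ∨ (∃ x, u = x * v) ∨ (∃ y, u = v * y) ∨ ∃ x y, u = x * v * y

/-- A subset of a semigroup is factorial if it is closed under taking factors. -/
def IsFactorialSet {S : Type*} [Semigroup S] (L : Set S) : Prop :=
  ∀ u ∈ L, ∀ v : S, IsFactor v u → v ∈ L

/-- A subset of a semigroup is irreducible if any two of its elements can be
"glued" inside it. -/
def IsIrreducibleSet {S : Type*} [Semigroup S] (L : Set S) : Prop :=
  ∀ u ∈ L, ∀ v ∈ L, ∃ w : S, u * w * v ∈ L

/-- Green's preorder: `u ≤_J v` iff `S¹uS¹ ⊆ S¹vS¹`, i.e. `v` is a factor of `u`. -/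
def JLe {S : Type*} [Semigroup S] (u v : S) : Prop := IsFactor v u

/-- Green's relation `J`. -/
def JEq {S : Type*} [Semigroup S] (u v : S) : Prop := JLe u v ∧ JLe v u

/-- The `J`-class of an element. -/
def JClass {S : Type*} [Semigroup S] (u : S) : Set S := {x | JEq x u}

/-- The set of all factors of elements of `A`. -/
def FactSet {S : Type*} [Semigroup S] (A : Set S) : Set S :=
  {v | ∃ u ∈ A, IsFactor v u}

lemma isFactor_refl {S : Type*} [Semigroup S] (u : S) : IsFactor u u := Or.inl rfl

lemma isFactor_mulL {S : Type*} [Semigroup S] {a b : S} (p : S)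
    (h : IsFactor a b) : IsFactor a (p * b) := by
  rcases h with rfl | ⟨x, rfl⟩ | ⟨y, rfl⟩ | ⟨x, y, rfl⟩
  · exact Or.inr (Or.inl ⟨p, rfl⟩)
  · exact Or.inr (Or.inl ⟨p * x, (mul_assoc p x a).symm⟩)
  · exact Or.inr (Or.inr (Or.inr ⟨p, y, (mul_assoc p a y).symm⟩))
  · exact Or.inr (Or.inr (Or.inr ⟨p * x, y, by simp only [mul_assoc]⟩))

lemma isFactor_mulR {S : Type*} [Semigroup S] {a b : S} (q : S)
    (h : IsFactor a b) : IsFactor a (b * q) := by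
  rcases h with rfl | ⟨x, rfl⟩ | ⟨y, rfl⟩ | ⟨x, y, rfl⟩
  · exact Or.inr (Or.inr (Or.inl ⟨q, rfl⟩))
  · exact Or.inr (Or.inr (Or.inr ⟨x, q, rfl⟩))
  · exact Or.inr (Or.inr (Or.inl ⟨y * q, mul_assoc a y q⟩))
  · exact Or.inr (Or.inr (Or.inr ⟨x, y * q, by simp only [mul_assoc]⟩))

lemma isFactor_trans {S : Type*} [Semigroup S] {a b c : S}
    (h1 : IsFactor a b) (h2 : IsFactor b c) : IsFactor a c := by
  rcases h2 with rfl | ⟨p, rfl⟩ | ⟨q, rfl⟩ | ⟨p, q, rfl⟩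
  · exact h1
  · exact isFactor_mulL p h1
  · exact isFactor_mulR q h1
  · exact isFactor_mulR q (isFactor_mulL p h1)

lemma isClosed_factorOver {S : Type*} [Semigroup S] [TopologicalSpace S]
    [CompactSpace S] [T2Space S] [ContinuousMul S] (u : S) :
    IsClosed {x | IsFactor u x} := by
  have he : {x | IsFactor u x} = {u} ∪ ((· * u) '' Set.univ) ∪ ((u * ·) '' Set.univ)
      ∪ ((fun p : S × S => p.1 * u * p.2) '' Set.univ) := by
    ext x
    simp only [IsFactor, Set.mem_setOf_eq, Set.mem_union, Set.mem_singleton_iff,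
      Set.image_univ, Set.mem_range, Prod.exists, eq_comm]
    tauto
  rw [he]
  refine (((isClosed_singleton.union ?_).union ?_).union ?_)
  · exact (isCompact_univ.image (continuous_id.mul continuous_const)).isClosed
  · exact (isCompact_univ.image (continuous_const.mul continuous_id)).isClosed
  · exact (isCompact_univ.image
      ((continuous_fst.mul continuous_const).mul continuous_snd)).isClosed

lemma regular_left {S : Type*} [Semigroup S] [TopologicalSpace S]
    [CompactSpace S] [T2Space S] [ContinuousMul S] (u p0 t0 : S)
    (h1 : p0 * u * t0 = u) (h2 : IsFactor u t0) :
    ∃ e : S, e * e = e ∧ IsFactor u e ∧ IsFactor e u := by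
  set T : Set S := {t | (∃ p, p * u * t = u) ∧ IsFactor u t} with hT
  have hne : T.Nonempty := ⟨t0, ⟨p0, h1⟩, h2⟩
  have hmul : ∀ a ∈ T, ∀ b ∈ T, a * b ∈ T := by
    rintro a ⟨⟨p, hp⟩, hfa⟩ b ⟨⟨q, hq⟩, hfb⟩
    refine ⟨⟨q * p, ?_⟩, isFactor_mulR b hfa⟩
    calc q * p * u * (a * b) = q * (p * u * a) * b := by simp only [mul_assoc]
    _ = u := by rw [hp, hq]
  have hclosed : IsClosed T := by
    have h3 : IsClosed {t : S | ∃ p, p * u * t = u} := by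
      have : {t : S | ∃ p, p * u * t = u}
          = Prod.snd '' {q : S × S | q.1 * u * q.2 = u} := by
        ext t
        simp only [Set.mem_setOf_eq, Set.mem_image, Prod.exists]
        constructor
        · rintro ⟨p, hp⟩; exact ⟨p, t, hp, rfl⟩
        · rintro ⟨p, t', hp, rfl⟩; exact ⟨p, hp⟩
      rw [this]
      have hK : IsClosed {q : S × S | q.1 * u * q.2 = u} :=
        isClosed_eq ((continuous_fst.mul continuous_const).mul continuous_snd)
          continuous_const
      exact (hK.isCompact.image continuous_snd).isClosed
    exact h3.inter (isClosed_factorOver u)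
  obtain ⟨e, heT, hee⟩ := exists_idempotent_in_compact_subsemigroup
    (fun r => continuous_id.mul continuous_const) T hne hclosed.isCompact hmul
  obtain ⟨⟨p, hp⟩, hf⟩ := heT
  have hue : u * e = u := by
    calc u * e = p * u * e * e := by rw [hp]
    _ = p * u * (e * e) := by rw [mul_assoc]
    _ = u := by rw [hee, hp]
  exact ⟨e, hee, hf, Or.inr (Or.inl ⟨u, hue.symm⟩)⟩

lemma regular_right {S : Type*} [Semigroup S] [TopologicalSpace S]
    [CompactSpace S] [T2Space S] [ContinuousMul S] (u q0 t0 : S)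
    (h1 : t0 * u * q0 = u) (h2 : IsFactor u t0) :
    ∃ e : S, e * e = e ∧ IsFactor u e ∧ IsFactor e u := by
  set T : Set S := {t | (∃ q, t * u * q = u) ∧ IsFactor u t} with hT
  have hne : T.Nonempty := ⟨t0, ⟨q0, h1⟩, h2⟩
  have hmul : ∀ a ∈ T, ∀ b ∈ T, a * b ∈ T := by
    rintro a ⟨⟨p, hp⟩, hfa⟩ b ⟨⟨q, hq⟩, hfb⟩
    refine ⟨⟨q * p, ?_⟩, isFactor_mulR b hfa⟩
    calc a * b * u * (q * p) = a * (b * u * q) * p := by simp only [mul_assoc]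
    _ = u := by rw [hq, hp]
  have hclosed : IsClosed T := by
    have h3 : IsClosed {t : S | ∃ q, t * u * q = u} := by
      have : {t : S | ∃ q, t * u * q = u}
          = Prod.fst '' {q : S × S | q.1 * u * q.2 = u} := by
        ext t
        simp only [Set.mem_setOf_eq, Set.mem_image, Prod.exists]
        constructor
        · rintro ⟨p, hp⟩; exact ⟨t, p, hp, rfl⟩
        · rintro ⟨t', p, hp, rfl⟩; exact ⟨p, hp⟩
      rw [this]
      have hK : IsClosed {q : S × S | q.1 * u * q.2 = u} :=
        isClosed_eq ((continuous_fst.mul continuous_const).mul continuous_snd)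
          continuous_const
      exact (hK.isCompact.image continuous_fst).isClosed
    exact h3.inter (isClosed_factorOver u)
  obtain ⟨e, heT, hee⟩ := exists_idempotent_in_compact_subsemigroup
    (fun r => continuous_id.mul continuous_const) T hne hclosed.isCompact hmul
  obtain ⟨⟨q, hq⟩, hf⟩ := heT
  have hue : e * u = u := by
    calc e * u = e * (e * u * q) := by rw [hq]
    _ = e * e * u * q := by simp only [mul_assoc]
    _ = u := by rw [hee, hq]
  exact ⟨e, hee, hf, Or.inr (Or.inr (Or.inl ⟨u, hue.symm⟩))⟩

lemma regular_of_factor {S : Type*} [Semigroup S] [TopologicalSpace S]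
    [CompactSpace S] [T2Space S] [ContinuousMul S] (u w : S)
    (h : IsFactor (u * w * u) u) :
    ∃ e : S, e * e = e ∧ IsFactor u e ∧ IsFactor e u := by
  rcases h with h0 | ⟨x, hx⟩ | ⟨y, hy⟩ | ⟨x, y, hxy⟩
  · -- u = u * w * u : e = u * w is idempotent
    refine ⟨u * w, ?_, Or.inr (Or.inr (Or.inl ⟨w, rfl⟩)), Or.inr (Or.inr (Or.inl ⟨u, h0⟩))⟩
    calc u * w * (u * w) = u * w * u * w := (mul_assoc (u * w) u w).symm
    _ = u * w := by rw [← h0]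
  · -- u = x * (u * w * u)
    refine regular_left u x (w * u) ?_ (Or.inr (Or.inl ⟨w, rfl⟩))
    calc x * u * (w * u) = x * (u * w * u) := by simp only [mul_assoc]
    _ = u := hx.symm
  · -- u = (u * w * u) * y
    exact regular_right u y (u * w) hy.symm (Or.inr (Or.inr (Or.inl ⟨w, rfl⟩)))
  · -- u = x * (u * w * u) * y
    refine regular_left u x (w * u * y) ?_ (Or.inr (Or.inr (Or.inr ⟨w, y, rfl⟩)))
    calc x * u * (w * u * y) = x * (u * w * u) * y := by simp only [mul_assoc]
    _ = u := hxy.symm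

lemma exists_jminimal {S : Type*} [Semigroup S] [TopologicalSpace S]
    [CompactSpace S] [T2Space S] [ContinuousMul S]
    (A : Set S) (hclosed : IsClosed A) (hne : A.Nonempty) :
    ∃ u ∈ A, ∀ v ∈ A, IsFactor u v → IsFactor v u := by
  obtain ⟨a0, ha0⟩ := hne
  set F : Set (Set S) := (fun u => {x | IsFactor u x} ∩ A) '' A with hF
  have key : ∀ c ⊆ F, IsChain (· ⊆ ·) c → c.Nonempty →
      ∃ lb ∈ F, ∀ s ∈ c, lb ⊆ s := by
    intro c hcF hchain hcne
    have hnemem : ∀ s ∈ c, s.Nonempty := by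
      intro s hs
      obtain ⟨v, hv, rfl⟩ := hcF hs
      exact ⟨v, isFactor_refl v, hv⟩
    have hclosedmem : ∀ s ∈ c, IsClosed s := by
      intro s hs
      obtain ⟨v, hv, rfl⟩ := hcF hs
      exact (isClosed_factorOver v).inter hclosed
    haveI : Nonempty c := hcne.to_subtype
    have hdir : DirectedOn (· ⊇ ·) c := by
      intro s hs t ht
      rcases hchain.total hs ht with h | h
      · exact ⟨s, hs, le_refl _, h⟩
      · exact ⟨t, ht, h, le_refl _⟩
    have hint : (⋂₀ c).Nonempty :=
      IsCompact.nonempty_sInter_of_directed_nonempty_isCompact_isClosed hdir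
        hnemem (fun s hs => (hclosedmem s hs).isCompact) hclosedmem
    obtain ⟨m, hm⟩ := hint
    obtain ⟨s0, hs0⟩ := hcne
    have hmA : m ∈ A := by
      obtain ⟨v, hv, hveq⟩ := hcF hs0
      have := hm s0 hs0
      rw [← hveq] at this
      exact this.2
    refine ⟨{x | IsFactor m x} ∩ A, ⟨m, hmA, rfl⟩, ?_⟩
    intro s hs
    obtain ⟨v, hv, rfl⟩ := hcF hs
    have hmv : IsFactor v m := (hm _ hs).1
    exact Set.inter_subset_inter_left A (fun x hx => isFactor_trans hmv hx)
  obtain ⟨M, -, hMmin⟩ := zorn_superset_nonempty F key _ ⟨a0, ha0, rfl⟩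
  obtain ⟨u, huA, rfl⟩ := hMmin.prop
  refine ⟨u, huA, fun v hvA huv => ?_⟩
  have hsub : {x | IsFactor v x} ∩ A ⊆ {x | IsFactor u x} ∩ A :=
    Set.inter_subset_inter_left A (fun x hx => isFactor_trans huv hx)
  have heq := hMmin.2 ⟨v, hvA, rfl⟩ hsub
  exact (heq ⟨isFactor_refl u, huA⟩).1

/-- Every closed, non-empty, factorial, irreducible subset `A` of a compact
semigroup has an apex: a unique minimal `J`-class `J(A)` contained in `A`;
moreover `J(A)` is regular and `A = Fact(J(A))`. -/
theorem exists_apex {S : Type*} [Semigroup S] [Nonempty S] [TopologicalSpace S]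
    [CompactSpace S] [T2Space S] [ContinuousMul S]
    (A : Set S) (hclosed : IsClosed A) (hne : A.Nonempty)
    (hfac : IsFactorialSet A) (hirr : IsIrreducibleSet A) :
    ∃ u ∈ A,
      -- the `J`-class of `u` is contained in `A` and is minimal among `J`-classes in `A`
      JClass u ⊆ A ∧ (∀ v ∈ A, JLe v u → JEq v u) ∧
      -- uniqueness of such a minimal `J`-class
      (∀ u' ∈ A, JClass u' ⊆ A → (∀ v ∈ A, JLe v u' → JEq v u') → JEq u' u) ∧
      -- regularity
      (∃ e : S, IsIdempotentElem e ∧ JEq e u) ∧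
      -- `A` consists exactly of the factors of the apex
      A = FactSet (JClass u) := by
  obtain ⟨u, huA, hmin⟩ := exists_jminimal A hclosed hne
  have hminJ : ∀ v ∈ A, JLe v u → JEq v u := fun v hv h => ⟨h, hmin v hv h⟩
  have hJsub : JClass u ⊆ A := fun x hx => hfac u huA x hx.2
  refine ⟨u, huA, hJsub, hminJ, ?_, ?_, ?_⟩
  · -- uniqueness
    intro u' hu' _ hmin'
    obtain ⟨w, hw⟩ := hirr u' hu' u huA
    have hz1 : JLe (u' * w * u) u' :=
      Or.inr (Or.inr (Or.inl ⟨w * u, mul_assoc u' w u⟩))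
    have hz2 : JLe (u' * w * u) u := Or.inr (Or.inl ⟨u' * w, rfl⟩)
    have e1 := hmin' _ hw hz1
    have e2 := hminJ _ hw hz2
    exact ⟨isFactor_trans e2.1 e1.2, isFactor_trans e1.1 e2.2⟩
  · -- regularity
    obtain ⟨w, hw⟩ := hirr u huA u huA
    have hz : JLe (u * w * u) u := Or.inr (Or.inl ⟨u * w, rfl⟩)
    have e2 := hminJ _ hw hz
    obtain ⟨e, hee, hf1, hf2⟩ := regular_of_factor u w e2.2
    exact ⟨e, hee, hf1, hf2⟩
  · -- A = FactSet (JClass u)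
    ext a
    constructor
    · intro ha
      obtain ⟨w, hw⟩ := hirr u huA a ha
      have hz : JLe (u * w * a) u :=
        Or.inr (Or.inr (Or.inl ⟨w * a, mul_assoc u w a⟩))
      have e2 := hminJ _ hw hz
      exact ⟨u * w * a, e2, Or.inr (Or.inl ⟨u * w, rfl⟩)⟩
    · rintro ⟨x, hx, hfa⟩
      exact hfac x (hJsub hx) a hfa
end

section
/- Let φ : S → T be a continuous surjective homomorphism of compact semigroups and let J be a regular J-class of T. Then: (1) there is a unique J-class J' of S minimal with respect to the property φ(J') ⊆ J, and J' is the apex of the closed factorial irreducible set φ⁻¹(Fact(J)); (2) J' is regular and φ(J') = J; (3) each R-class, L-class and H-class of S contained in J' maps under φ onto an R-class, L-class, H-class respectively of T contained in J; (4) φ(E(J')) = E(J), where E denotes the set of idempotents. In particular, each maximal subgroup of J' maps homomorphically onto a maximal subgroup of J, and each maximal subgroup of J is the image of a maximal subgroup of J'. -/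
/-- Green's preorder `R`: `u ≤_R v` iff `uS¹ ⊆ vS¹`. -/
def RLe {S : Type*} [Semigroup S] (u v : S) : Prop := u = v ∨ ∃ y, u = v * y

/-- Green's relation `R`. -/
def REq {S : Type*} [Semigroup S] (u v : S) : Prop := RLe u v ∧ RLe v u

/-- Green's preorder `L`: `u ≤_L v` iff `S¹u ⊆ S¹v`. -/
def LLe {S : Type*} [Semigroup S] (u v : S) : Prop := u = v ∨ ∃ x, u = x * v

/-- Green's relation `L`. -/
def LEq {S : Type*} [Semigroup S] (u v : S) : Prop := LLe u v ∧ LLe v u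

/-- Green's relation `H = R ∩ L`. -/
def HEq' {S : Type*} [Semigroup S] (u v : S) : Prop := REq u v ∧ LEq u v

/-- The `R`-class of an element. -/
def RClass {S : Type*} [Semigroup S] (u : S) : Set S := {x | REq x u}

/-- The `L`-class of an element. -/
def LClass {S : Type*} [Semigroup S] (u : S) : Set S := {x | LEq x u}

/-- The `H`-class of an element. -/
def HClass {S : Type*} [Semigroup S] (u : S) : Set S := {x | HEq' x u}

/-!
Compactness makes `S` stable: if `u ≤_J uc` then `u ≤_R uc`, because an idempotent of the closed
subsemigroup `{b ∈ cS¹ | u ∈ S¹ub}` fixes `u` on the right (dually for `L`). The set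
`φ⁻¹(Fact J) = {x | f ≤_J φ x}` is closed and irreducible (as `f = f f`), so compactness gives it a
`≤_J`-minimum `w₀`, and an idempotent `w` of the closed subsemigroup `φ⁻¹(f) ∩ S¹w₀S¹` is again a
minimum; `J' = J(w)`. Every lift of an element of `J` can be chosen below an element of `J'` in the
relevant preorder, and it lies in `φ⁻¹(Fact J)`, so minimality and stability put it in the right
`R`-, `L`- or `H`-class.
-/

section Green

variable {S : Type*} [Semigroup S]

theorem exists_coe_eq_coe_mul (a : S) (y : WithOne S) : ∃ b : S, (b : WithOne S) = a * y := by
  induction y with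
  | one => exact ⟨a, (mul_one _).symm⟩
  | coe c => exact ⟨a * c, WithOne.coe_mul a c⟩

theorem exists_coe_eq_mul_coe (x : WithOne S) (a : S) : ∃ b : S, (b : WithOne S) = x * a := by
  induction x with
  | one => exact ⟨a, (one_mul _).symm⟩
  | coe c => exact ⟨c * a, WithOne.coe_mul c a⟩

theorem rLe_iff {u v : S} : RLe u v ↔ ∃ y : WithOne S, (u : WithOne S) = v * y := by
  constructor
  · rintro (rfl | ⟨y, rfl⟩)
    · exact ⟨1, (mul_one _).symm⟩
    · exact ⟨y, WithOne.coe_mul v y⟩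
  · rintro ⟨y, h⟩
    induction y with
    | one => exact Or.inl (by simpa using h)
    | coe b => exact Or.inr ⟨b, by exact_mod_cast h⟩

theorem lLe_iff {u v : S} : LLe u v ↔ ∃ x : WithOne S, (u : WithOne S) = x * v := by
  constructor
  · rintro (rfl | ⟨x, rfl⟩)
    · exact ⟨1, (one_mul _).symm⟩
    · exact ⟨x, WithOne.coe_mul x v⟩
  · rintro ⟨x, h⟩
    induction x with
    | one => exact Or.inl (by simpa using h)
    | coe a => exact Or.inr ⟨a, by exact_mod_cast h⟩

theorem jLe_iff {u v : S} : JLe u v ↔ ∃ x y : WithOne S, (u : WithOne S) = x * v * y := by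
  constructor
  · rintro (rfl | ⟨x, rfl⟩ | ⟨y, rfl⟩ | ⟨x, y, rfl⟩)
    · exact ⟨1, 1, by simp⟩
    · exact ⟨x, 1, by simp⟩
    · exact ⟨1, y, by simp⟩
    · exact ⟨x, y, by simp⟩
  · rintro ⟨x, y, h⟩
    induction x with
    | one =>
      induction y with
      | one => exact Or.inl (by simpa using h)
      | coe b => exact Or.inr (Or.inr (Or.inl ⟨b, by rw [one_mul] at h; exact_mod_cast h⟩))
    | coe a =>
      induction y with
      | one => exact Or.inr (Or.inl ⟨a, by rw [mul_one] at h; exact_mod_cast h⟩)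
      | coe b => exact Or.inr (Or.inr (Or.inr ⟨a, b, by exact_mod_cast h⟩))

theorem jLe_refl (u : S) : JLe u u := Or.inl rfl

theorem jEq_refl (u : S) : JEq u u := ⟨jLe_refl u, jLe_refl u⟩

theorem rEq_refl (u : S) : REq u u := ⟨Or.inl rfl, Or.inl rfl⟩

theorem lEq_refl (u : S) : LEq u u := ⟨Or.inl rfl, Or.inl rfl⟩

theorem JLe.trans {u v w : S} (h₁ : JLe u v) (h₂ : JLe v w) : JLe u w := by
  obtain ⟨x, y, h₁⟩ := jLe_iff.1 h₁
  obtain ⟨x', y', h₂⟩ := jLe_iff.1 h₂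
  exact jLe_iff.2 ⟨x * x', y' * y, by rw [h₁, h₂]; simp only [mul_assoc]⟩

theorem RLe.trans {u v w : S} (h₁ : RLe u v) (h₂ : RLe v w) : RLe u w := by
  obtain ⟨y, h₁⟩ := rLe_iff.1 h₁
  obtain ⟨y', h₂⟩ := rLe_iff.1 h₂
  exact rLe_iff.2 ⟨y' * y, by rw [h₁, h₂, mul_assoc]⟩

theorem LLe.trans {u v w : S} (h₁ : LLe u v) (h₂ : LLe v w) : LLe u w := by
  obtain ⟨x, h₁⟩ := lLe_iff.1 h₁
  obtain ⟨x', h₂⟩ := lLe_iff.1 h₂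
  exact lLe_iff.2 ⟨x * x', by rw [h₁, h₂, mul_assoc]⟩

theorem JEq.symm {u v : S} (h : JEq u v) : JEq v u := ⟨h.2, h.1⟩

theorem REq.trans {u v w : S} (h₁ : REq u v) (h₂ : REq v w) : REq u w :=
  ⟨h₁.1.trans h₂.1, h₂.2.trans h₁.2⟩

theorem rLe_mul_right (u c : S) : RLe (u * c) u := Or.inr ⟨c, rfl⟩

theorem lLe_mul_left (c u : S) : LLe (c * u) u := Or.inr ⟨c, rfl⟩

theorem jLe_mul_mul (a u b : S) : JLe (a * u * b) u := Or.inr (Or.inr (Or.inr ⟨a, b, rfl⟩))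

theorem RLe.jLe {u v : S} (h : RLe u v) : JLe u v := by
  obtain ⟨y, h⟩ := rLe_iff.1 h
  exact jLe_iff.2 ⟨1, y, by rw [h, one_mul]⟩

theorem LLe.jLe {u v : S} (h : LLe u v) : JLe u v := by
  obtain ⟨x, h⟩ := lLe_iff.1 h
  exact jLe_iff.2 ⟨x, 1, by rw [h, mul_one]⟩

theorem RLe.mul_left {u v : S} (h : RLe u v) (c : S) : RLe (c * u) (c * v) := by
  obtain ⟨y, h⟩ := rLe_iff.1 h
  exact rLe_iff.2 ⟨y, by rw [WithOne.coe_mul, WithOne.coe_mul, h, mul_assoc]⟩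

theorem LLe.mul_right {u v : S} (h : LLe u v) (c : S) : LLe (u * c) (v * c) := by
  obtain ⟨x, h⟩ := lLe_iff.1 h
  exact lLe_iff.2 ⟨x, by rw [WithOne.coe_mul, WithOne.coe_mul, h, mul_assoc]⟩

theorem IsIdempotentElem.mul_eq_of_rLe {e u : S} (he : IsIdempotentElem e) (h : RLe u e) :
    e * u = u := by
  rcases h with rfl | ⟨y, rfl⟩
  · exact he
  · rw [← mul_assoc, he.eq]

theorem IsIdempotentElem.mul_eq_of_lLe {e u : S} (he : IsIdempotentElem e) (h : LLe u e) :
    u * e = u := by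
  rcases h with rfl | ⟨x, rfl⟩
  · exact he
  · rw [mul_assoc, he.eq]

theorem LLe.mul_mul_eq {t s : S} (h : LLe t s) {r : S} (hs : s * r * s = s) : t * (r * s) = t := by
  rcases h with rfl | ⟨x, rfl⟩
  · rw [← mul_assoc, hs]
  · rw [mul_assoc, ← mul_assoc s, hs]

theorem IsIdempotentElem.coe_mul_self {e : S} (he : IsIdempotentElem e) :
    (e : WithOne S) * e = e := by
  rw [← WithOne.coe_mul, he.eq]

theorem IsIdempotentElem.exists_eq_mul_mul_of_jLe {e t : S} (he : IsIdempotentElem e)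
    (h : JLe e t) : ∃ a b : S, e = a * t * b := by
  obtain ⟨x, y, h⟩ := jLe_iff.1 h
  obtain ⟨a, ha⟩ := exists_coe_eq_coe_mul e x
  obtain ⟨b, hb⟩ := exists_coe_eq_mul_coe y e
  refine ⟨a, b, WithOne.coe_injective ?_⟩
  calc (e : WithOne S) = e * (x * t * y) * e := by rw [← h, he.coe_mul_self, he.coe_mul_self]
    _ = (e * x) * t * (y * e) := by simp only [mul_assoc]
    _ = _ := by rw [← ha, ← hb]; simp only [WithOne.coe_mul]

theorem IsIdempotentElem.exists_eq_mul_mul_of_jLe_self {e t : S} (he : IsIdempotentElem e)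
    (h : JLe t e) : ∃ a b : S, t = a * e * b := by
  obtain ⟨x, y, h⟩ := jLe_iff.1 h
  obtain ⟨a, ha⟩ := exists_coe_eq_mul_coe x e
  obtain ⟨b, hb⟩ := exists_coe_eq_coe_mul e y
  refine ⟨a, b, WithOne.coe_injective ?_⟩
  calc (t : WithOne S) = x * (e * e * e) * y := by rw [h, he.coe_mul_self, he.coe_mul_self]
    _ = (x * e) * e * (e * y) := by simp only [mul_assoc]
    _ = _ := by rw [← ha, ← hb]; simp only [WithOne.coe_mul]

theorem mem_factSet_jClass_iff {f t : S} : t ∈ FactSet (JClass f) ↔ JLe f t :=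
  ⟨fun ⟨_, hu, htu⟩ => JLe.trans (hu : JEq _ f).2 htu, fun h => ⟨f, jEq_refl f, h⟩⟩

variable {T : Type*} [Semigroup T]

theorem JLe.map (φ : S →ₙ* T) {u v : S} (h : JLe u v) : JLe (φ u) (φ v) := by
  rcases h with rfl | ⟨x, rfl⟩ | ⟨y, rfl⟩ | ⟨x, y, rfl⟩
  · exact jLe_refl _
  · exact Or.inr (Or.inl ⟨φ x, map_mul φ x v⟩)
  · exact Or.inr (Or.inr (Or.inl ⟨φ y, map_mul φ v y⟩))
  · exact Or.inr (Or.inr (Or.inr ⟨φ x, φ y, by rw [map_mul, map_mul]⟩))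

theorem RLe.map (φ : S →ₙ* T) {u v : S} (h : RLe u v) : RLe (φ u) (φ v) := by
  rcases h with rfl | ⟨y, rfl⟩
  · exact Or.inl rfl
  · exact Or.inr ⟨φ y, map_mul φ v y⟩

theorem LLe.map (φ : S →ₙ* T) {u v : S} (h : LLe u v) : LLe (φ u) (φ v) := by
  rcases h with rfl | ⟨x, rfl⟩
  · exact Or.inl rfl
  · exact Or.inr ⟨φ x, map_mul φ x v⟩

theorem JEq.map (φ : S →ₙ* T) {u v : S} (h : JEq u v) : JEq (φ u) (φ v) :=
  ⟨h.1.map φ, h.2.map φ⟩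

theorem REq.map (φ : S →ₙ* T) {u v : S} (h : REq u v) : REq (φ u) (φ v) :=
  ⟨h.1.map φ, h.2.map φ⟩

theorem LEq.map (φ : S →ₙ* T) {u v : S} (h : LEq u v) : LEq (φ u) (φ v) :=
  ⟨h.1.map φ, h.2.map φ⟩

theorem exists_rLe_map_eq {φ : S →ₙ* T} (hφ : Function.Surjective φ) {u : S} {t : T}
    (h : RLe t (φ u)) : ∃ x, RLe x u ∧ φ x = t := by
  rcases h with rfl | ⟨β, rfl⟩
  · exact ⟨u, Or.inl rfl, rfl⟩
  · obtain ⟨b, rfl⟩ := hφ β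
    exact ⟨u * b, rLe_mul_right u b, map_mul φ u b⟩

theorem exists_lLe_map_eq {φ : S →ₙ* T} (hφ : Function.Surjective φ) {u : S} {t : T}
    (h : LLe t (φ u)) : ∃ x, LLe x u ∧ φ x = t := by
  rcases h with rfl | ⟨α, rfl⟩
  · exact ⟨u, Or.inl rfl, rfl⟩
  · obtain ⟨a, rfl⟩ := hφ α
    exact ⟨a * u, lLe_mul_left a u, map_mul φ a u⟩

theorem isIrreducibleSet_setOf_jLe_map {φ : S →ₙ* T} (hφ : Function.Surjective φ) {f : T}
    (hf : IsIdempotentElem f) : IsIrreducibleSet {x | JLe f (φ x)} := by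
  intro u hu v hv
  obtain ⟨α, β, hu⟩ := hf.exists_eq_mul_mul_of_jLe hu
  obtain ⟨γ, δ, hv⟩ := hf.exists_eq_mul_mul_of_jLe hv
  obtain ⟨c, hc⟩ := hφ (β * γ)
  refine ⟨c, jLe_iff.2 ⟨α, δ, ?_⟩⟩
  calc (f : WithOne T) = ↑((α * φ u * β) * (γ * φ v * δ)) := by rw [← hu, ← hv, hf.eq]
    _ = _ := by rw [map_mul, map_mul, hc]; simp only [WithOne.coe_mul, mul_assoc]

theorem exists_jEq_map_eq {φ : S →ₙ* T} (hsurj : Function.Surjective φ) {f : T}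
    (hf : IsIdempotentElem f) {w : S} (hwf : φ w = f) (hmin : ∀ v, JLe f (φ v) → JLe w v)
    {t : T} (ht : JEq t f) : ∃ u, JEq u w ∧ φ u = t := by
  obtain ⟨α, β, rfl⟩ := hf.exists_eq_mul_mul_of_jLe_self ht.1
  obtain ⟨a, rfl⟩ := hsurj α
  obtain ⟨b, rfl⟩ := hsurj β
  have hφ : φ (a * w * b) = φ a * f * φ b := by rw [map_mul, map_mul, hwf]
  exact ⟨a * w * b, ⟨jLe_mul_mul a w b, hmin _ (hφ ▸ ht.2)⟩, hφ⟩

end Green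

section Compact

variable {S : Type*} [Semigroup S] [TopologicalSpace S] [CompactSpace S] [T2Space S]
  [ContinuousMul S]

theorem isClosed_setOf_rLe : IsClosed {p : S × S | RLe p.1 p.2} := by
  have h : {p : S × S | RLe p.1 p.2} =
      Set.diagonal S ∪ Set.range (fun q : S × S => (q.1 * q.2, q.1)) := by
    ext ⟨u, v⟩
    simp only [RLe, Set.mem_union, Set.mem_diagonal_iff, Set.mem_range,
      Prod.ext_iff, Prod.exists]
    grind
  rw [h]
  exact isClosed_diagonal.union (isCompact_range (by fun_prop)).isClosed

theorem isClosed_setOf_lLe : IsClosed {p : S × S | LLe p.1 p.2} := by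
  have h : {p : S × S | LLe p.1 p.2} =
      Set.diagonal S ∪ Set.range (fun q : S × S => (q.1 * q.2, q.2)) := by
    ext ⟨u, v⟩
    simp only [LLe, Set.mem_union, Set.mem_diagonal_iff, Set.mem_range,
      Prod.ext_iff, Prod.exists]
    grind
  rw [h]
  exact isClosed_diagonal.union (isCompact_range (by fun_prop)).isClosed

theorem isClosed_setOf_jLe : IsClosed {p : S × S | JLe p.1 p.2} := by
  have h : {p : S × S | JLe p.1 p.2} =
      Set.diagonal S ∪ Set.range (fun q : S × S => (q.1 * q.2, q.2)) ∪
        Set.range (fun q : S × S => (q.1 * q.2, q.1)) ∪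
        Set.range (fun q : S × S × S => (q.1 * q.2.1 * q.2.2, q.2.1)) := by
    ext ⟨u, v⟩
    simp only [JLe, IsFactor, Set.mem_union, Set.mem_diagonal_iff,
      Set.mem_range, Prod.ext_iff, Prod.exists]
    grind
  rw [h]
  exact ((isClosed_diagonal.union (isCompact_range (by fun_prop)).isClosed).union
    (isCompact_range (by fun_prop)).isClosed).union (isCompact_range (by fun_prop)).isClosed

theorem rLe_mul_of_lLe_mul {u c : S} (h : LLe u (u * c)) : RLe u (u * c) := by
  set B := {b : S | LLe u (u * b)} ∩ {b | RLe b c}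
  have hB_closed : IsClosed B :=
    (isClosed_setOf_lLe.preimage (by fun_prop : Continuous fun b : S => (u, u * b))).inter
      (isClosed_setOf_rLe.preimage (by fun_prop : Continuous fun b : S => (b, c)))
  have hB_mul : ∀ b ∈ B, ∀ b' ∈ B, b * b' ∈ B := by
    rintro b ⟨hb, hbc⟩ b' ⟨hb', -⟩
    refine ⟨?_, (rLe_mul_right b b').trans hbc⟩
    obtain ⟨x, hx⟩ := lLe_iff.1 hb
    obtain ⟨x', hx'⟩ := lLe_iff.1 hb'
    refine lLe_iff.2 ⟨x' * x, ?_⟩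
    calc (u : WithOne S) = x' * (u * b') := by rw [← WithOne.coe_mul]; exact hx'
      _ = x' * (x * ↑(u * b) * b') := by rw [← hx]
      _ = _ := by simp only [WithOne.coe_mul, mul_assoc]
  obtain ⟨e, ⟨hue, hec⟩, he⟩ := exists_idempotent_in_compact_subsemigroup
    continuous_mul_const B ⟨c, h, Or.inl rfl⟩ hB_closed.isCompact hB_mul
  have hu : u * e = u := IsIdempotentElem.mul_eq_of_lLe he (hue.trans (lLe_mul_left u e))
  simpa only [hu] using hec.mul_left u

theorem lLe_mul_of_rLe_mul {u c : S} (h : RLe u (c * u)) : LLe u (c * u) := by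
  set B := {b : S | RLe u (b * u)} ∩ {b | LLe b c}
  have hB_closed : IsClosed B :=
    (isClosed_setOf_rLe.preimage (by fun_prop : Continuous fun b : S => (u, b * u))).inter
      (isClosed_setOf_lLe.preimage (by fun_prop : Continuous fun b : S => (b, c)))
  have hB_mul : ∀ b ∈ B, ∀ b' ∈ B, b * b' ∈ B := by
    rintro b ⟨hb, -⟩ b' ⟨hb', hb'c⟩
    refine ⟨?_, (lLe_mul_left b b').trans hb'c⟩
    obtain ⟨y, hy⟩ := rLe_iff.1 hb
    obtain ⟨y', hy'⟩ := rLe_iff.1 hb'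
    refine rLe_iff.2 ⟨y' * y, ?_⟩
    calc (u : WithOne S) = (b * u) * y := by rw [← WithOne.coe_mul]; exact hy
      _ = b * (↑(b' * u) * y') * y := by rw [← hy']
      _ = _ := by simp only [WithOne.coe_mul, mul_assoc]
  obtain ⟨e, ⟨hue, hec⟩, he⟩ := exists_idempotent_in_compact_subsemigroup
    continuous_mul_const B ⟨c, h, Or.inl rfl⟩ hB_closed.isCompact hB_mul
  have hu : e * u = u := IsIdempotentElem.mul_eq_of_rLe he (hue.trans (rLe_mul_right e u))
  simpa only [hu] using hec.mul_right u

theorem rLe_mul_of_jLe_mul {u c : S} (h : JLe u (u * c)) : RLe u (u * c) := by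
  obtain ⟨x, y, h⟩ := jLe_iff.1 h
  induction y with
  | one => exact rLe_mul_of_lLe_mul (lLe_iff.2 ⟨x, by rwa [mul_one] at h⟩)
  | coe d =>
    have : LLe u (u * (c * d)) := lLe_iff.2 ⟨x, by rw [h]; simp only [WithOne.coe_mul, mul_assoc]⟩
    exact (rLe_mul_of_lLe_mul this).trans (by rw [← mul_assoc]; exact rLe_mul_right _ d)

theorem lLe_mul_of_jLe_mul {u c : S} (h : JLe u (c * u)) : LLe u (c * u) := by
  obtain ⟨x, y, h⟩ := jLe_iff.1 h
  induction x with
  | one => exact lLe_mul_of_rLe_mul (rLe_iff.2 ⟨y, by rwa [one_mul] at h⟩)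
  | coe d =>
    have : RLe u (d * c * u) := rLe_iff.2 ⟨y, by rw [h]; simp only [WithOne.coe_mul, mul_assoc]⟩
    exact (lLe_mul_of_rLe_mul this).trans (by rw [mul_assoc]; exact lLe_mul_left d _)

theorem rEq_of_rLe_of_jLe {u v : S} (h : RLe u v) (h' : JLe v u) : REq u v := by
  rcases h with rfl | ⟨y, rfl⟩
  · exact rEq_refl u
  · exact ⟨rLe_mul_right v y, rLe_mul_of_jLe_mul h'⟩

theorem lEq_of_lLe_of_jLe {u v : S} (h : LLe u v) (h' : JLe v u) : LEq u v := by
  rcases h with rfl | ⟨x, rfl⟩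
  · exact lEq_refl u
  · exact ⟨lLe_mul_left x v, lLe_mul_of_jLe_mul h'⟩

theorem exists_mul_mul_eq_self_of_jEq {u e : S} (he : IsIdempotentElem e) (hu : JEq u e) :
    ∃ v, u * v * u = u := by
  obtain ⟨x, y, hxy⟩ := jLe_iff.1 hu.2
  obtain ⟨z, hz⟩ := exists_coe_eq_coe_mul u y
  have hzu : RLe z u := rLe_iff.2 ⟨y, hz⟩
  have hex : (e : WithOne S) = x * z := by rw [hxy, hz, mul_assoc]
  have hez : LLe e z := lLe_iff.2 ⟨x, hex⟩
  have hzR : REq z u := rEq_of_rLe_of_jLe hzu (hu.1.trans hez.jLe)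
  have hzL : LEq e z := lEq_of_lLe_of_jLe hez (hzu.jLe.trans hu.1)
  obtain ⟨r, hr⟩ := rLe_iff.1 hzR.2
  obtain ⟨q, hq⟩ := rLe_iff.1 hzR.1
  -- `z L e` gives `z = z e = z x z`, and `u R z` transports this to `u = u (q x) u`
  have hu_reg : (u : WithOne S) = u * (q * x) * u := by
    calc (u : WithOne S) = ↑(z * e) * r := by rw [he.mul_eq_of_lLe hzL.2, hr]
      _ = z * x * (z * r) := by rw [WithOne.coe_mul, hex]; simp only [mul_assoc]
      _ = _ := by rw [← hr, hq]; simp only [mul_assoc]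
  generalize q * x = v at hu_reg
  induction v with
  | one =>
    have hidem : u * u = u := by rw [mul_one] at hu_reg; exact_mod_cast hu_reg.symm
    exact ⟨u, by rw [hidem, hidem]⟩
  | coe v => exact ⟨v, by exact_mod_cast hu_reg.symm⟩

end Compact

section Lifting

variable {S T : Type*} [Semigroup S] [TopologicalSpace S] [CompactSpace S] [T2Space S]
  [ContinuousMul S] [Semigroup T]

theorem IsIrreducibleSet.exists_jLe_minimum {A : Set S} (hA : IsIrreducibleSet A)
    (hA_closed : IsClosed A) (hA_ne : A.Nonempty) : ∃ w ∈ A, ∀ v ∈ A, JLe w v := by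
  have : Nonempty A := hA_ne.to_subtype
  let lowerIn : A → Set S := fun v => A ∩ {x | JLe x v}
  have h_closed (v : A) : IsClosed (lowerIn v) :=
    hA_closed.inter (isClosed_setOf_jLe.preimage (by fun_prop : Continuous fun x : S => (x, v.1)))
  have h_directed : Directed (· ⊇ ·) lowerIn := by
    rintro ⟨u, hu⟩ ⟨v, hv⟩
    obtain ⟨c, hc⟩ := hA u hu v hv
    refine ⟨⟨u * c * v, hc⟩, fun x ⟨hxA, hx⟩ => ⟨hxA, hx.trans ?_⟩,
      fun x ⟨hxA, hx⟩ => ⟨hxA, hx.trans (lLe_mul_left (u * c) v).jLe⟩⟩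
    exact (rLe_mul_right (u * c) v).jLe.trans (rLe_mul_right u c).jLe
  obtain ⟨w, hw⟩ := IsCompact.nonempty_iInter_of_directed_nonempty_isCompact_isClosed lowerIn
    h_directed (fun v => ⟨v, v.2, jLe_refl _⟩) (fun v => (h_closed v).isCompact) h_closed
  simp only [Set.mem_iInter] at hw
  exact ⟨w, (hw ⟨_, hA_ne.some_mem⟩).1, fun v hv => (hw ⟨v, hv⟩).2⟩

theorem exists_isIdempotentElem_jLe_map_eq [TopologicalSpace T] [T1Space T] {φ : S →ₙ* T}
    (hφ : Continuous φ) {u : S} (hu : IsIdempotentElem (φ u)) :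
    ∃ e, IsIdempotentElem e ∧ JLe e u ∧ φ e = φ u := by
  set B := φ ⁻¹' {φ u} ∩ {x | JLe x u}
  have hB_closed : IsClosed B :=
    (isClosed_singleton.preimage hφ).inter
      (isClosed_setOf_jLe.preimage (by fun_prop : Continuous fun x : S => (x, u)))
  have hB_mul : ∀ x ∈ B, ∀ y ∈ B, x * y ∈ B := by
    rintro x ⟨hx, hxu⟩ y ⟨hy, -⟩
    refine ⟨?_, (rLe_mul_right x y).jLe.trans hxu⟩
    rw [Set.mem_preimage, map_mul, hx, hy, hu.eq, Set.mem_singleton_iff]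
  obtain ⟨e, ⟨he, heu⟩, hid⟩ := exists_idempotent_in_compact_subsemigroup continuous_mul_const
    B ⟨u, rfl, jLe_refl u⟩ hB_closed.isCompact hB_mul
  exact ⟨e, hid, heu, he⟩

theorem exists_isIdempotentElem_jLe_minimum [TopologicalSpace T] [CompactSpace T] [T2Space T]
    [ContinuousMul T] {φ : S →ₙ* T} (hcont : Continuous φ) (hsurj : Function.Surjective φ)
    {f : T} (hf : IsIdempotentElem f) :
    ∃ w, IsIdempotentElem w ∧ φ w = f ∧ ∀ v, JLe f (φ v) → JLe w v := by
  obtain ⟨s, hs⟩ := hsurj f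
  obtain ⟨w₀, hw₀, hmin⟩ := (isIrreducibleSet_setOf_jLe_map hsurj hf).exists_jLe_minimum
    (isClosed_setOf_jLe.preimage (continuous_const.prodMk hcont)) ⟨s, hs ▸ jLe_refl f⟩
  obtain ⟨α, β, hαβ⟩ := hf.exists_eq_mul_mul_of_jLe hw₀
  obtain ⟨a, rfl⟩ := hsurj α
  obtain ⟨b, rfl⟩ := hsurj β
  have hz : φ (a * w₀ * b) = f := by rw [map_mul, map_mul, ← hαβ]
  obtain ⟨e, he, hez, hφe⟩ := exists_isIdempotentElem_jLe_map_eq hcont (hz ▸ hf)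
  exact ⟨e, he, hφe.trans hz, fun v hv => hez.trans ((jLe_mul_mul a w₀ b).trans (hmin v hv))⟩

theorem map_rClass {φ : S →ₙ* T} (hsurj : Function.Surjective φ) {f : T} {w : S}
    (hwf : φ w = f) (hmin : ∀ v, JLe f (φ v) → JLe w v) {u : S} (hu : JEq u w) :
    φ '' RClass u = RClass (φ u) := by
  refine Set.Subset.antisymm (Set.image_subset_iff.2 fun x (hx : REq x u) => hx.map φ)
    fun t (ht : REq t (φ u)) => ?_
  obtain ⟨x, hxu, rfl⟩ := exists_rLe_map_eq hsurj ht.1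
  have hfx : JLe f (φ x) := (hwf ▸ (hu.map φ).2 : JLe f (φ u)).trans ht.2.jLe
  exact ⟨x, rEq_of_rLe_of_jLe hxu (hu.1.trans (hmin x hfx)), rfl⟩

theorem map_lClass {φ : S →ₙ* T} (hsurj : Function.Surjective φ) {f : T} {w : S}
    (hwf : φ w = f) (hmin : ∀ v, JLe f (φ v) → JLe w v) {u : S} (hu : JEq u w) :
    φ '' LClass u = LClass (φ u) := by
  refine Set.Subset.antisymm (Set.image_subset_iff.2 fun x (hx : LEq x u) => hx.map φ)
    fun t (ht : LEq t (φ u)) => ?_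
  obtain ⟨x, hxu, rfl⟩ := exists_lLe_map_eq hsurj ht.1
  have hfx : JLe f (φ x) := (hwf ▸ (hu.map φ).2 : JLe f (φ u)).trans ht.2.jLe
  exact ⟨x, lEq_of_lLe_of_jLe hxu (hu.1.trans (hmin x hfx)), rfl⟩

theorem map_hClass {φ : S →ₙ* T} (hsurj : Function.Surjective φ) {f : T} {w : S}
    (hwid : IsIdempotentElem w) (hwf : φ w = f) (hmin : ∀ v, JLe f (φ v) → JLe w v) {u : S}
    (hu : JEq u w) : φ '' HClass u = HClass (φ u) := by
  refine Set.Subset.antisymm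
    (Set.image_subset_iff.2 fun x (hx : HEq' x u) => ⟨hx.1.map φ, hx.2.map φ⟩)
    fun t (ht : HEq' t (φ u)) => ?_
  obtain ⟨x, hxu, rfl⟩ : t ∈ φ '' RClass u := by rw [map_rClass hsurj hwf hmin hu]; exact ht.1
  obtain ⟨v, huv⟩ := exists_mul_mul_eq_self_of_jEq hwid hu
  -- right multiplication by `v u` fixes `φ x` (as `φ x ≤_L φ u`) and makes `x` `≤_L u`
  have hφz : φ (x * (v * u)) = φ x := by
    rw [map_mul, map_mul]
    exact ht.2.1.mul_mul_eq (by rw [← map_mul, ← map_mul, huv])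
  have hfx : JLe f (φ x) := (hwf ▸ (hu.map φ).2 : JLe f (φ u)).trans ht.2.2.jLe
  have hwz : JLe w (x * (v * u)) := hmin _ (hφz ▸ hfx)
  have hzL : LEq (x * (v * u)) u :=
    lEq_of_lLe_of_jLe (by rw [← mul_assoc]; exact lLe_mul_left _ u) (hu.1.trans hwz)
  have hzR : REq (x * (v * u)) x :=
    rEq_of_rLe_of_jLe (rLe_mul_right x _) (hxu.1.jLe.trans (hu.1.trans hwz))
  exact ⟨_, ⟨hzR.trans hxu, hzL⟩, hφz⟩

theorem exists_isIdempotentElem_jEq_map_eq [TopologicalSpace T] [T1Space T] {φ : S →ₙ* T}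
    (hcont : Continuous φ) (hsurj : Function.Surjective φ) {f : T} (hf : IsIdempotentElem f)
    {w : S} (hwf : φ w = f) (hmin : ∀ v, JLe f (φ v) → JLe w v) {g : T}
    (hg : IsIdempotentElem g) (hgf : JEq g f) : ∃ e, IsIdempotentElem e ∧ JEq e w ∧ φ e = g := by
  obtain ⟨u, hu, rfl⟩ := exists_jEq_map_eq hsurj hf hwf hmin hgf
  obtain ⟨e, he, heu, hφe⟩ := exists_isIdempotentElem_jLe_map_eq hcont hg
  exact ⟨e, he, ⟨heu.trans hu.1, hmin e (hφe ▸ hgf.2)⟩, hφe⟩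

end Lifting

theorem lift_regular_JClass_general {S T : Type*} [Semigroup S]
    [TopologicalSpace S] [CompactSpace S] [T2Space S] [ContinuousMul S]
    [Semigroup T] [TopologicalSpace T] [CompactSpace T] [T2Space T]
    [ContinuousMul T] (φ : S →ₙ* T) (hcont : Continuous φ)
    (hsurj : Function.Surjective φ) (f : T) (hf : IsIdempotentElem f) :
    ∃ w : S,
      -- (1) the `J`-class of `w` maps into `J` and is minimal as such
      (φ '' JClass w ⊆ JClass f) ∧
      (∀ v : S, φ '' JClass v ⊆ JClass f → JLe v w → JEq v w) ∧
      -- (1) uniqueness of the minimal such `J`-class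
      (∀ v : S, φ '' JClass v ⊆ JClass f →
        (∀ v' : S, φ '' JClass v' ⊆ JClass f → JLe v' v → JEq v' v) → JEq v w) ∧
      -- (1) it is the apex of `φ⁻¹(Fact(J))`
      (JClass w ⊆ φ ⁻¹' FactSet (JClass f)) ∧
      (∀ v ∈ φ ⁻¹' FactSet (JClass f), JLe v w → JEq v w) ∧
      -- (2) regularity and surjectivity onto `J`
      (∃ e : S, IsIdempotentElem e ∧ JEq e w) ∧
      (φ '' JClass w = JClass f) ∧
      -- (3) `R`-, `L`- and `H`-classes of `J'` map onto corresponding classes of `J`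
      (∀ u : S, JEq u w → φ u ∈ JClass f ∧
        φ '' RClass u = RClass (φ u) ∧ φ '' LClass u = LClass (φ u) ∧
        φ '' HClass u = HClass (φ u)) ∧
      -- (4) idempotents of `J'` map onto the idempotents of `J`
      (φ '' {x | x ∈ JClass w ∧ IsIdempotentElem x}
        = {y | y ∈ JClass f ∧ IsIdempotentElem y}) ∧
      -- in particular, maximal subgroups of `J'` map onto maximal subgroups of `J`,
      (∀ e : S, e ∈ JClass w → IsIdempotentElem e →
        IsIdempotentElem (φ e) ∧ φ e ∈ JClass f ∧ φ '' HClass e = HClass (φ e)) ∧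
      -- and every maximal subgroup of `J` is such an image
      (∀ g : T, g ∈ JClass f → IsIdempotentElem g →
        ∃ e : S, e ∈ JClass w ∧ IsIdempotentElem e ∧ φ e = g ∧
          φ '' HClass e = HClass g) := by
  obtain ⟨w, hwid, hwf, hmin⟩ := exists_isIdempotentElem_jLe_minimum hcont hsurj hf
  have hJ {u : S} (hu : JEq u w) : φ u ∈ JClass f := hwf ▸ hu.map φ
  have hJw : φ '' JClass w ⊆ JClass f := by
    rintro _ ⟨u, hu, rfl⟩
    exact hJ hu
  have hfac {v : S} (hv : φ '' JClass v ⊆ JClass f) : JLe f (φ v) :=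
    (hv ⟨v, jEq_refl v, rfl⟩ : JEq (φ v) f).2
  have hH {u : S} (hu : JEq u w) := map_hClass hsurj hwid hwf hmin hu
  refine ⟨w, hJw, fun v hv hvw => ⟨hvw, hmin v (hfac hv)⟩,
    fun v hv hvmin => (hvmin w hJw (hmin v (hfac hv))).symm,
    fun u hu => mem_factSet_jClass_iff.2 (hJ hu).2,
    fun v hv hvw => ⟨hvw, hmin v (mem_factSet_jClass_iff.1 hv)⟩, ⟨w, hwid, jEq_refl w⟩,
    hJw.antisymm fun t ht => exists_jEq_map_eq hsurj hf hwf hmin ht,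
    fun u hu => ⟨hJ hu, map_rClass hsurj hwf hmin hu, map_lClass hsurj hwf hmin hu, hH hu⟩,
    ?_, fun e he hid => ⟨hid.map φ, hJ he, hH he⟩, fun g hg hid => ?_⟩
  · refine Set.Subset.antisymm ?_ fun g ⟨hg, hid⟩ => ?_
    · rintro _ ⟨e, ⟨he, hid⟩, rfl⟩
      exact ⟨hJ he, hid.map φ⟩
    · obtain ⟨e, hid', he, rfl⟩ := exists_isIdempotentElem_jEq_map_eq hcont hsurj hf hwf hmin hid hg
      exact ⟨e, ⟨he, hid'⟩, rfl⟩
  · obtain ⟨e, hid', he, rfl⟩ := exists_isIdempotentElem_jEq_map_eq hcont hsurj hf hwf hmin hid hg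
    exact ⟨e, he, hid', rfl, hH he⟩

/-- Lifting a regular `J`-class `J = JClass f` (`f` an idempotent of `T`) along a
continuous surjective homomorphism `φ : S → T` of compact semigroups: there is a
unique `J`-class `J'` of `S` minimal with `φ(J') ⊆ J`; it is the apex of
`φ⁻¹(Fact(J))`; it is regular with `φ(J') = J`; each `R`-, `L`- and `H`-class of
`J'` maps onto the corresponding class of `J`; and `φ(E(J')) = E(J)`. -/
theorem lift_regular_JClass {S T : Type*} [Semigroup S] [Nonempty S]
    [TopologicalSpace S] [CompactSpace S] [T2Space S] [ContinuousMul S]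
    [Semigroup T] [Nonempty T] [TopologicalSpace T] [CompactSpace T] [T2Space T]
    [ContinuousMul T] (φ : S →ₙ* T) (hcont : Continuous φ)
    (hsurj : Function.Surjective φ) (f : T) (hf : IsIdempotentElem f) :
    ∃ w : S,
      -- (1) the `J`-class of `w` maps into `J` and is minimal as such
      (φ '' JClass w ⊆ JClass f) ∧
      (∀ v : S, φ '' JClass v ⊆ JClass f → JLe v w → JEq v w) ∧
      -- (1) uniqueness of the minimal such `J`-class
      (∀ v : S, φ '' JClass v ⊆ JClass f →
        (∀ v' : S, φ '' JClass v' ⊆ JClass f → JLe v' v → JEq v' v) → JEq v w) ∧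
      -- (1) it is the apex of `φ⁻¹(Fact(J))`
      (JClass w ⊆ φ ⁻¹' FactSet (JClass f)) ∧
      (∀ v ∈ φ ⁻¹' FactSet (JClass f), JLe v w → JEq v w) ∧
      -- (2) regularity and surjectivity onto `J`
      (∃ e : S, IsIdempotentElem e ∧ JEq e w) ∧
      (φ '' JClass w = JClass f) ∧
      -- (3) `R`-, `L`- and `H`-classes of `J'` map onto corresponding classes of `J`
      (∀ u : S, JEq u w → φ u ∈ JClass f ∧
        φ '' RClass u = RClass (φ u) ∧ φ '' LClass u = LClass (φ u) ∧
        φ '' HClass u = HClass (φ u)) ∧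
      -- (4) idempotents of `J'` map onto the idempotents of `J`
      (φ '' {x | x ∈ JClass w ∧ IsIdempotentElem x}
        = {y | y ∈ JClass f ∧ IsIdempotentElem y}) ∧
      -- in particular, maximal subgroups of `J'` map onto maximal subgroups of `J`,
      (∀ e : S, e ∈ JClass w → IsIdempotentElem e →
        IsIdempotentElem (φ e) ∧ φ e ∈ JClass f ∧ φ '' HClass e = HClass (φ e)) ∧
      -- and every maximal subgroup of `J` is such an image
      (∀ g : T, g ∈ JClass f → IsIdempotentElem g →
        ∃ e : S, e ∈ JClass w ∧ IsIdempotentElem e ∧ φ e = g ∧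
          φ '' HClass e = HClass g) :=
  lift_regular_JClass_general φ hcont hsurj f hf
end

section
/- Let X be a finite alphabet, S a compact semigroup, and ι : X⁺ → S a semigroup homomorphism. If L ⊆ X⁺ is an irreducible subset of the free semigroup X⁺, then the topological closure of ι(L) in S is an irreducible subset of S. -/
/-- If `L` is an irreducible subset of the free semigroup `X⁺` and
`ι : X⁺ → S` is a homomorphism into a compact semigroup, then the closure of
`ι(L)` is irreducible in `S`. -/
theorem closure_image_irreducible {X : Type*} [Fintype X] {S : Type*} [Semigroup S]
    [Nonempty S] [TopologicalSpace S] [CompactSpace S] [T2Space S] [ContinuousMul S]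
    (ι : FreeSemigroup X →ₙ* S) (L : Set (FreeSemigroup X))
    (hL : IsIrreducibleSet L) :
    IsIrreducibleSet (closure (ι '' L)) := by
  intro u hu v hv
  -- the set of "middle pieces" compatible with neighborhoods U of u, V of v
  set A : Set S → Set S → Set S := fun U V =>
    {s | ∃ a ∈ L, ∃ b ∈ L, ∃ c, ι a ∈ U ∧ ι b ∈ V ∧ a * c * b ∈ L ∧ s = ι c} with hA
  have hAmono : ∀ U U' V V', U ⊆ U' → V ⊆ V' → A U V ⊆ A U' V' := by
    rintro U U' V V' hU hV s ⟨a, ha, b, hb, c, haU, hbV, hc, rfl⟩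
    exact ⟨a, ha, b, hb, c, hU haU, hV hbV, hc, rfl⟩
  have hAne : ∀ U ∈ nhds u, ∀ V ∈ nhds v, (A U V).Nonempty := by
    intro U hU V hV
    obtain ⟨_, hxU, a, ha, rfl⟩ := mem_closure_iff_nhds.mp hu U hU
    obtain ⟨_, hyV, b, hb, rfl⟩ := mem_closure_iff_nhds.mp hv V hV
    obtain ⟨c, hc⟩ := hL a ha b hb
    exact ⟨ι c, a, ha, b, hb, c, hxU, hyV, hc, rfl⟩
  -- find a cluster point w via compactness
  let I := {p : Set S × Set S // p.1 ∈ nhds u ∧ p.2 ∈ nhds v}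
  have hIne : Nonempty I := ⟨⟨(Set.univ, Set.univ), Filter.univ_mem, Filter.univ_mem⟩⟩
  let t : I → Set S := fun p => closure (A p.1.1 p.1.2)
  have htd : Directed (· ⊇ ·) t := by
    rintro ⟨⟨U, V⟩, hU, hV⟩ ⟨⟨U', V'⟩, hU', hV'⟩
    refine ⟨⟨(U ∩ U', V ∩ V'), Filter.inter_mem hU hU', Filter.inter_mem hV hV'⟩, ?_, ?_⟩ <;>
      exact closure_mono (hAmono _ _ _ _ (by simp) (by simp))
  obtain ⟨w, hw⟩ := IsCompact.nonempty_iInter_of_directed_nonempty_isCompact_isClosed t htd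
    (fun p => ((hAne _ p.2.1 _ p.2.2).mono subset_closure))
    (fun p => isClosed_closure.isCompact) (fun p => isClosed_closure)
  refine ⟨w, mem_closure_iff_nhds.mpr fun N hN => ?_⟩
  have hcont : Continuous (fun p : S × S × S => p.1 * p.2.1 * p.2.2) := by fun_prop
  have hten : Filter.Tendsto (fun p : S × S × S => p.1 * p.2.1 * p.2.2)
      (nhds u ×ˢ (nhds w ×ˢ nhds v)) (nhds (u * w * v)) := by
    rw [← nhds_prod_eq, ← nhds_prod_eq]; exact hcont.tendsto _
  obtain ⟨U, hU, T, hT, hUT⟩ := Filter.mem_prod_iff.mp (hten hN)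
  obtain ⟨W, hW, V, hV, hWV⟩ := Filter.mem_prod_iff.mp hT
  have hwcl : w ∈ closure (A U V) := Set.mem_iInter.mp hw ⟨(U, V), hU, hV⟩
  obtain ⟨_, hsW, a, ha, b, hb, c, haU, hbV, hcL, rfl⟩ :=
    mem_closure_iff_nhds.mp hwcl W hW
  refine ⟨ι (a * c * b), ?_, Set.mem_image_of_mem _ hcL⟩
  have : ((ι a, ι c, ι b) : S × S × S) ∈ U ×ˢ T :=
    ⟨haU, hWV ⟨hsW, hbV⟩⟩
  have := hUT this
  simpa using this
end

section
/- Let G be a non-trivial finite group, let (B,T) be a finite transitive partial transformation semigroup all of whose elements are partial maps of rank at most 1, let S = G ≀ (B,T) be the wreath product, and let π : G ≀ (B,T) → T be the wreath product projection. Then S is simple if T consists of total maps, and otherwise S is 0-simple. The maximal subgroup of the non-zero J-class of S is isomorphic to G; more precisely, if e ≠ 0 is an idempotent of S such that the image of the partial map π(e) is {b}, then the map ψ : G_e → G sending a matrix s to its (b,b)-entry is an isomorphism from the maximal subgroup G_e at e onto G. -/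
/-! Every non-zero element `m` of `G ≀ (B,T)` has all its non-zero entries in one column `d`,
because `π(m)` has rank one. By transitivity there are `u, v ∈ T` carrying `d` to a row `b₀` in
which a given non-zero `a` has an entry `(c, g₀)`, and `c` back to `d`; lifting them to matrices,
with the label `g₀⁻¹` on `u`, gives `m = (m · U) · a · V`. So an ideal with a non-zero element is
everything. If some `t ∈ T` is undefined at `b`, then `u t = ∅` for any `u ∈ T` with `b u = b`,
so the zero matrix lies in `S`.

For a non-zero idempotent `e` with image `{b}` one gets `e b = (b, 1)`. An element `s` of `G_e`
satisfies `s = e s = s e`, so it is determined by its `(b, b)`-entry, while `e · (g I)` lies in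
`G_e` and has entry `g`. -/

/-- Composition of partial maps, acting on the right: `b (f ⬝ g) = (b f) g`. -/
def pmul {B : Type*} (f g : B → Option B) : B → Option B := fun b => (f b).bind g

/-- A row monomial `B × B` matrix over `G⁰` is modelled as a function sending each
row to its (column, entry) pair, if any.  `matToMap` is its underlying partial map. -/
def matToMap {B G : Type*} (M : B → Option (B × G)) : B → Option B :=
  fun b => (M b).map Prod.fst

/-- Multiplication of row monomial matrices over `G⁰`. -/
def mmul {B G : Type*} [Mul G] (M N : B → Option (B × G)) : B → Option (B × G) :=
  fun b => (M b).bind fun p => (N p.1).map fun q => (q.1, p.2 * q.2)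

/-- The zero matrix. -/
def zeroMat (B G : Type*) : B → Option (B × G) := fun _ => none

/-- The wreath product `G ≀ (B,T)`: all row monomial matrices over `G⁰` whose
underlying partial map lies in `T`. -/
def wreathSet (G : Type*) {B : Type*} (T : Set (B → Option B)) :
    Set (B → Option (B × G)) := {M | matToMap M ∈ T}

/-- Green's preorder `R` relative to the subsemigroup `S` of matrices. -/
def RLeW {B G : Type*} [Mul G] (S : Set (B → Option (B × G)))
    (u v : B → Option (B × G)) : Prop := u = v ∨ ∃ y ∈ S, u = mmul v y

/-- Green's preorder `L` relative to the subsemigroup `S` of matrices. -/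
def LLeW {B G : Type*} [Mul G] (S : Set (B → Option (B × G)))
    (u v : B → Option (B × G)) : Prop := u = v ∨ ∃ x ∈ S, u = mmul x v

/-- The `H`-class of `e` in the subsemigroup `S` of matrices (for an idempotent,
this is the maximal subgroup at `e`). -/
def HClassW {B G : Type*} [Mul G] (S : Set (B → Option (B × G)))
    (e : B → Option (B × G)) : Set (B → Option (B × G)) :=
  {s | s ∈ S ∧ RLeW S s e ∧ RLeW S e s ∧ LLeW S s e ∧ LLeW S e s}


section Wreath

variable {B G : Type*}

def ofPartialMap (t : B → Option B) (g : G) : B → Option (B × G) :=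
  fun x => (t x).map fun c => (c, g)

/-- `g · I`, in general not an element of the wreath product. -/
def scalarMat (B : Type*) (g : G) : B → Option (B × G) := fun x => some (x, g)

def SupportedInColumn (M : B → Option (B × G)) (b : B) : Prop :=
  ∀ x p, M x = some p → p.1 = b

lemma mmul_assoc [Semigroup G] (L M N : B → Option (B × G)) :
    mmul (mmul L M) N = mmul L (mmul M N) := by
  funext x
  rcases hL : L x with _ | ⟨c, g⟩
  · simp [mmul, hL]
  · rcases hM : M c with _ | ⟨d, h⟩
    · simp [mmul, hL, hM]
    · rcases hN : N d <;> simp [mmul, hL, hM, hN, mul_assoc]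

lemma mmul_apply_of_eq_some [Mul G] {M N : B → Option (B × G)} {x c d : B} {g h : G}
    (hM : M x = some (c, g)) (hN : N c = some (d, h)) : mmul M N x = some (d, g * h) := by
  simp [mmul, hM, hN]

lemma exists_apply_eq_some_of_ne_zeroMat {M : B → Option (B × G)} (hM : M ≠ zeroMat B G) :
    ∃ x p, M x = some p := by
  by_contra! h
  exact hM (funext fun x => Option.eq_none_iff_forall_ne_some.mpr (h x))

lemma matToMap_mmul [Mul G] (M N : B → Option (B × G)) :
    matToMap (mmul M N) = pmul (matToMap M) (matToMap N) := by
  funext x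
  rcases hx : M x <;> simp [matToMap, mmul, pmul, hx, Option.map_map, Function.comp_def]

lemma mmul_mem_wreathSet [Mul G] {T : Set (B → Option B)}
    (hTmul : ∀ f ∈ T, ∀ g ∈ T, pmul f g ∈ T) {M N : B → Option (B × G)}
    (hM : M ∈ wreathSet G T) (hN : N ∈ wreathSet G T) : mmul M N ∈ wreathSet G T := by
  simpa only [wreathSet, Set.mem_ofPred_eq, matToMap_mmul] using hTmul _ hM _ hN

lemma ofPartialMap_mem_wreathSet {T : Set (B → Option B)} {t : B → Option B} (ht : t ∈ T)
    (g : G) : ofPartialMap t g ∈ wreathSet G T := by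
  have : matToMap (ofPartialMap t g) = t := by
    funext x
    simp [matToMap, ofPartialMap, Option.map_map, Function.comp_def]
  simpa [wreathSet, this] using ht

lemma mmul_scalarMat_mem_wreathSet [Mul G] {T : Set (B → Option B)} {M : B → Option (B × G)}
    (hM : M ∈ wreathSet G T) (g : G) : mmul M (scalarMat B g) ∈ wreathSet G T := by
  have : matToMap (mmul M (scalarMat B g)) = matToMap M := by
    funext x
    rcases hx : M x <;> simp [matToMap, mmul, scalarMat, hx]
  simpa [wreathSet, this] using hM

lemma mmul_scalarMat_scalarMat [Mul G] (g h : G) :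
    mmul (scalarMat B g) (scalarMat B h) = scalarMat B (g * h) :=
  rfl

lemma mmul_scalarMat_one [MulOneClass G] (M : B → Option (B × G)) :
    mmul M (scalarMat B 1) = M := by
  funext x
  rcases hx : M x <;> simp [mmul, scalarMat, hx]

lemma supportedInColumn_of_mem_wreathSet {T : Set (B → Option B)}
    (hTrank : ∀ t ∈ T, ∀ b b' c c' : B, t b = some c → t b' = some c' → c = c')
    {M : B → Option (B × G)} (hM : M ∈ wreathSet G T) {x d : B} {g : G}
    (hx : M x = some (d, g)) : SupportedInColumn M d := fun y p hy =>
  hTrank _ hM y x p.1 d (by simp [matToMap, hy]) (by simp [matToMap, hx])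

lemma SupportedInColumn.mmul_left [Mul G] {N : B → Option (B × G)} {b : B}
    (hN : SupportedInColumn N b) (M : B → Option (B × G)) : SupportedInColumn (mmul M N) b := by
  intro x p hx
  simp only [mmul, Option.bind_eq_some_iff, Option.map_eq_some_iff] at hx
  obtain ⟨q, -, r, hr, rfl⟩ := hx
  exact hN _ r hr

lemma SupportedInColumn.mmul_congr_right [Mul G] {e : B → Option (B × G)} {b : B}
    (he : SupportedInColumn e b) {s t : B → Option (B × G)} (hst : s b = t b) :
    mmul e s = mmul e t := by
  funext x
  rcases hx : e x with _ | p
  · simp [mmul, hx]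
  · simp [mmul, hx, he x p hx, hst]

lemma SupportedInColumn.mmul_eq_self [MulOneClass G] {s e : B → Option (B × G)} {b : B}
    (hs : SupportedInColumn s b) (heb : e b = some (b, 1)) : mmul s e = s := by
  funext x
  rcases hx : s x with _ | ⟨c, g⟩
  · simp [mmul, hx]
  · obtain rfl : c = b := hs x _ hx
    simp [mmul, hx, heb]

lemma mmul_mmul_mmul_ofPartialMap [Group G] {m a : B → Option (B × G)} {u v : B → Option B}
    {d b₀ c : B} {g₀ : G} (hm : SupportedInColumn m d) (hu : u d = some b₀)
    (ha : a b₀ = some (c, g₀)) (hv : v c = some d) :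
    mmul (mmul (mmul m (ofPartialMap u g₀⁻¹)) a) (ofPartialMap v 1) = m := by
  funext x
  rcases hx : m x with _ | ⟨d', g⟩
  · simp [mmul, hx]
  · obtain rfl : d' = d := hm x _ hx
    simp [mmul, ofPartialMap, hx, hu, ha, hv]

variable {T : Set (B → Option B)}

lemma wreathSet_subset_of_ne_zeroMat [Group G]
    (hTmul : ∀ f ∈ T, ∀ g ∈ T, pmul f g ∈ T)
    (hTtrans : ∀ b b' : B, ∃ t ∈ T, t b = some b')
    (hTrank : ∀ t ∈ T, ∀ b b' c c' : B, t b = some c → t b' = some c' → c = c')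
    {I : Set (B → Option (B × G))}
    (hI : ∀ a ∈ I, ∀ s ∈ wreathSet G T, mmul a s ∈ I ∧ mmul s a ∈ I)
    {a : B → Option (B × G)} (haI : a ∈ I) (ha : a ≠ zeroMat B G) : wreathSet G T ⊆ I := by
  intro m hm
  by_cases hm0 : m = zeroMat B G
  · subst hm0
    exact (hI a haI _ hm).2
  obtain ⟨b₀, ⟨c, g₀⟩, hab⟩ := exists_apply_eq_some_of_ne_zeroMat ha
  obtain ⟨x, ⟨d, h⟩, hmx⟩ := exists_apply_eq_some_of_ne_zeroMat hm0
  obtain ⟨u, huT, hu⟩ := hTtrans d b₀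
  obtain ⟨v, hvT, hv⟩ := hTtrans c d
  have hmd := supportedInColumn_of_mem_wreathSet hTrank hm hmx
  rw [← mmul_mmul_mmul_ofPartialMap hmd hu hab hv]
  have hmu := mmul_mem_wreathSet hTmul hm (ofPartialMap_mem_wreathSet huT g₀⁻¹)
  exact (hI _ (hI a haI _ hmu).2 _ (ofPartialMap_mem_wreathSet hvT 1)).1

lemma zeroMat_mem_wreathSet_of_apply_eq_none
    (hTmul : ∀ f ∈ T, ∀ g ∈ T, pmul f g ∈ T)
    (hTtrans : ∀ b b' : B, ∃ t ∈ T, t b = some b')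
    (hTrank : ∀ t ∈ T, ∀ b b' c c' : B, t b = some c → t b' = some c' → c = c')
    {t : B → Option B} (ht : t ∈ T) {b : B} (htb : t b = none) :
    zeroMat B G ∈ wreathSet G T := by
  obtain ⟨u, huT, hu⟩ := hTtrans b b
  -- `u` has image `{b}` and `t` is undefined at `b`
  have hut : pmul u t = matToMap (zeroMat B G) := by
    funext x
    rcases hx : u x with _ | c
    · simp [pmul, matToMap, zeroMat, hx]
    · simp [pmul, matToMap, zeroMat, hx, hTrank u huT x b c b hx hu, htb]
  simpa [wreathSet, ← hut] using hTmul u huT t ht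

lemma exists_mmul_ne_zeroMat (hTtrans : ∀ b b' : B, ∃ t ∈ T, t b = some b') [MulOneClass G]
    (b : B) : ∃ a ∈ wreathSet G T, ∃ a' ∈ wreathSet G T, mmul a a' ≠ zeroMat B G := by
  obtain ⟨t, ht, htb⟩ := hTtrans b b
  refine ⟨_, ofPartialMap_mem_wreathSet ht 1, _, ofPartialMap_mem_wreathSet ht 1, fun h => ?_⟩
  simpa [mmul, ofPartialMap, zeroMat, htb] using congrFun h b

lemma eq_singleton_zeroMat_or_eq_wreathSet [Group G]
    (hTmul : ∀ f ∈ T, ∀ g ∈ T, pmul f g ∈ T)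
    (hTtrans : ∀ b b' : B, ∃ t ∈ T, t b = some b')
    (hTrank : ∀ t ∈ T, ∀ b b' c c' : B, t b = some c → t b' = some c' → c = c')
    {I : Set (B → Option (B × G))} (hIS : I ⊆ wreathSet G T) (hIne : I.Nonempty)
    (hI : ∀ a ∈ I, ∀ s ∈ wreathSet G T, mmul a s ∈ I ∧ mmul s a ∈ I) :
    I = {zeroMat B G} ∨ I = wreathSet G T := by
  by_cases h : ∃ a ∈ I, a ≠ zeroMat B G
  · obtain ⟨a, haI, ha⟩ := h
    exact .inr (hIS.antisymm (wreathSet_subset_of_ne_zeroMat hTmul hTtrans hTrank hI haI ha))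
  · push Not at h
    exact .inl (hIne.subset_singleton_iff.mp h)

lemma eq_wreathSet_of_forall_isSome [Group G]
    (hTmul : ∀ f ∈ T, ∀ g ∈ T, pmul f g ∈ T)
    (hTtrans : ∀ b b' : B, ∃ t ∈ T, t b = some b')
    (hTrank : ∀ t ∈ T, ∀ b b' c c' : B, t b = some c → t b' = some c' → c = c')
    (htot : ∀ t ∈ T, ∀ b : B, (t b).isSome)
    {I : Set (B → Option (B × G))} (hIS : I ⊆ wreathSet G T) (hIne : I.Nonempty)
    (hI : ∀ a ∈ I, ∀ s ∈ wreathSet G T, mmul a s ∈ I ∧ mmul s a ∈ I) : I = wreathSet G T := by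
  obtain ⟨a, haI⟩ := hIne
  refine hIS.antisymm ?_
  by_cases ha : a = zeroMat B G
  · -- the empty partial map is total only when `B` is empty
    have : IsEmpty B := ⟨fun b => by simpa [ha, matToMap, zeroMat] using htot _ (hIS haI) b⟩
    intro m _
    rwa [Subsingleton.elim m a]
  · exact wreathSet_subset_of_ne_zeroMat hTmul hTtrans hTrank hI haI ha

end Wreath

section MaximalSubgroup

variable {B G : Type*} {e : B → Option (B × G)} {b : B}

lemma SupportedInColumn.mmul_scalarMat [Mul G] (he : SupportedInColumn e b) (g : G) :
    SupportedInColumn (mmul e (scalarMat B g)) b := by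
  intro x p hx
  simp only [mmul, scalarMat, Option.bind_eq_some_iff, Option.map_some, Option.some.injEq] at hx
  obtain ⟨q, hq, rfl⟩ := hx
  exact he x q hq

lemma apply_eq_some_one_of_idempotent [Group G] (he0 : e ≠ zeroMat B G) (hee : mmul e e = e)
    (he : SupportedInColumn e b) : e b = some (b, 1) := by
  obtain ⟨x, ⟨c, g⟩, hx⟩ := exists_apply_eq_some_of_ne_zeroMat he0
  obtain rfl : c = b := he x _ hx
  -- `(e e) x = e x = (b, g)` forces `g * (e b).2 = g`
  simpa [mmul, hx] using congrFun hee x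

lemma mmul_eq_of_RLeW [Semigroup G] {S : Set (B → Option (B × G))} {s : B → Option (B × G)}
    (hee : mmul e e = e) (hs : RLeW S s e) : mmul e s = s := by
  rcases hs with rfl | ⟨y, -, rfl⟩
  · exact hee
  · rw [← mmul_assoc, hee]

lemma mmul_eq_of_LLeW [Semigroup G] {S : Set (B → Option (B × G))} {s : B → Option (B × G)}
    (hee : mmul e e = e) (hs : LLeW S s e) : mmul s e = s := by
  rcases hs with rfl | ⟨x, -, rfl⟩
  · exact hee
  · rw [mmul_assoc, hee]

variable {S : Set (B → Option (B × G))} {s t : B → Option (B × G)}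

lemma exists_apply_eq_of_mem_HClassW [Semigroup G] (hee : mmul e e = e)
    (he : SupportedInColumn e b) (heb : e b ≠ none) (hs : s ∈ HClassW S e) :
    ∃ g, s b = some (b, g) := by
  obtain ⟨-, -, hes, hse, -⟩ := hs
  have hsb : s b ≠ none := by
    rcases hes with rfl | ⟨y, -, rfl⟩
    · exact heb
    · intro hsb
      simp [mmul, hsb] at heb
  obtain ⟨⟨c, g⟩, hp⟩ := Option.ne_none_iff_exists'.mp hsb
  have hs : SupportedInColumn s b := mmul_eq_of_LLeW hee hse ▸ he.mmul_left s
  obtain rfl : c = b := hs b _ hp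
  exact ⟨g, hp⟩

lemma eq_of_mem_HClassW_of_apply_eq [Semigroup G] (hee : mmul e e = e)
    (he : SupportedInColumn e b) (hs : s ∈ HClassW S e) (ht : t ∈ HClassW S e)
    (hst : s b = t b) : s = t := by
  rw [← mmul_eq_of_RLeW hee hs.2.1, ← mmul_eq_of_RLeW hee ht.2.1]
  exact he.mmul_congr_right hst

lemma mmul_scalarMat_mmul_mmul_scalarMat [Monoid G] (he : SupportedInColumn e b)
    (heb : e b = some (b, 1)) (g h : G) :
    mmul (mmul e (scalarMat B g)) (mmul e (scalarMat B h)) = mmul e (scalarMat B (g * h)) := by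
  rw [← mmul_assoc, (he.mmul_scalarMat g).mmul_eq_self heb, mmul_assoc, mmul_scalarMat_scalarMat]

lemma mmul_scalarMat_mem_HClassW [Group G] {T : Set (B → Option B)} (heT : e ∈ wreathSet G T)
    (hee : mmul e e = e) (he : SupportedInColumn e b) (heb : e b = some (b, 1)) (g : G) :
    mmul e (scalarMat B g) ∈ HClassW (wreathSet G T) e := by
  have hsT := mmul_scalarMat_mem_wreathSet heT g
  have hmul (h k : G) := mmul_scalarMat_mmul_mmul_scalarMat he heb h k
  have hyT := mmul_scalarMat_mem_wreathSet heT g⁻¹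
  refine ⟨hsT, .inr ⟨_, hsT, by rw [← mmul_assoc, hee]⟩, .inr ⟨_, hyT, ?_⟩,
    .inr ⟨_, hsT, ((he.mmul_scalarMat g).mmul_eq_self heb).symm⟩, .inr ⟨_, hyT, ?_⟩⟩
  · rw [hmul, mul_inv_cancel, mmul_scalarMat_one]
  · rw [hmul, inv_mul_cancel, mmul_scalarMat_one]

end MaximalSubgroup

theorem wreath_simple_and_maximal_subgroup_general {B G : Type*}
    [Group G]
    (T : Set (B → Option B))
    (hTmul : ∀ f ∈ T, ∀ g ∈ T, pmul f g ∈ T)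
    (hTtrans : ∀ b b' : B, ∃ t ∈ T, t b = some b')
    (hTrank : ∀ t ∈ T, ∀ b b' c c' : B, t b = some c → t b' = some c' → c = c') :
    -- if `T` consists of total maps then `S` is simple
    ((∀ t ∈ T, ∀ b : B, (t b).isSome) →
      ∀ I : Set (B → Option (B × G)), I ⊆ wreathSet G T → I.Nonempty →
        (∀ a ∈ I, ∀ s ∈ wreathSet G T, mmul a s ∈ I ∧ mmul s a ∈ I) →
        I = wreathSet G T) ∧
    -- otherwise `S` is `0`-simple
    ((¬ ∀ t ∈ T, ∀ b : B, (t b).isSome) →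
      zeroMat B G ∈ wreathSet G T ∧
      (∃ a ∈ wreathSet G T, ∃ a' ∈ wreathSet G T, mmul a a' ≠ zeroMat B G) ∧
      (∀ I : Set (B → Option (B × G)), I ⊆ wreathSet G T → I.Nonempty →
        (∀ a ∈ I, ∀ s ∈ wreathSet G T, mmul a s ∈ I ∧ mmul s a ∈ I) →
        I = {zeroMat B G} ∨ I = wreathSet G T)) ∧
    -- the maximal subgroup at a non-zero idempotent `e` with image of `π(e)`
    -- equal to `{b}` is isomorphic to `G` via the `(b,b)`-entry map `ψ`
    (∀ e ∈ wreathSet G T, e ≠ zeroMat B G → mmul e e = e → ∀ b : B,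
      (∀ b₀ : B, ∀ p : B × G, e b₀ = some p → p.1 = b) →
      -- `ψ` is well defined: every element of `G_e` has a `(b,b)`-entry
      (∀ s ∈ HClassW (wreathSet G T) e, ∃ g : G, s b = some (b, g)) ∧
      -- `ψ` is multiplicative
      (∀ s ∈ HClassW (wreathSet G T) e, ∀ t' ∈ HClassW (wreathSet G T) e,
        ∀ gs gt : G, s b = some (b, gs) → t' b = some (b, gt) →
          mmul s t' b = some (b, gs * gt)) ∧
      -- `ψ` is injective
      (∀ s ∈ HClassW (wreathSet G T) e, ∀ t' ∈ HClassW (wreathSet G T) e,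
        ∀ g : G, s b = some (b, g) → t' b = some (b, g) → s = t') ∧
      -- `ψ` is surjective
      (∀ g : G, ∃ s ∈ HClassW (wreathSet G T) e, s b = some (b, g))) := by
  refine ⟨fun htot _ hIS hIne hI =>
      eq_wreathSet_of_forall_isSome hTmul hTtrans hTrank htot hIS hIne hI,
    fun hpartial => ?_, fun e heT he0 hee b he => ?_⟩
  · push Not at hpartial
    obtain ⟨t, ht, b, htb⟩ := hpartial
    exact ⟨zeroMat_mem_wreathSet_of_apply_eq_none hTmul hTtrans hTrank ht (by simpa using htb),
      exists_mmul_ne_zeroMat hTtrans b,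
      fun _ hIS hIne hI => eq_singleton_zeroMat_or_eq_wreathSet hTmul hTtrans hTrank hIS hIne hI⟩
  · have heb := apply_eq_some_one_of_idempotent he0 hee he
    refine ⟨fun s hs => exists_apply_eq_of_mem_HClassW hee he (by simp [heb]) hs,
      fun s _ t _ gs gt hs ht => mmul_apply_of_eq_some hs ht,
      fun s hs t ht g hsg htg => eq_of_mem_HClassW_of_apply_eq hee he hs ht (hsg.trans htg.symm),
      fun g => ⟨_, mmul_scalarMat_mem_HClassW heT hee he heb g, ?_⟩⟩
    simpa using mmul_apply_of_eq_some heb (show scalarMat B g b = some (b, g) from rfl)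

/-- Let `G` be a non-trivial finite group and `(B,T)` a finite transitive partial
transformation semigroup of rank at most `1` maps, and let `S = G ≀ (B,T)`.
Then `S` is simple if `T` consists of total maps and `0`-simple otherwise, and
for every non-zero idempotent `e` whose underlying partial map has image `{b}`,
the map sending an element of the maximal subgroup at `e` to its `(b,b)`-entry
is an isomorphism onto `G`. -/
theorem wreath_simple_and_maximal_subgroup {B G : Type*} [Fintype B] [Nonempty B]
    [Group G] [Fintype G] [Nontrivial G]
    (T : Set (B → Option B)) (hTne : T.Nonempty)
    (hTmul : ∀ f ∈ T, ∀ g ∈ T, pmul f g ∈ T)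
    (hTtrans : ∀ b b' : B, ∃ t ∈ T, t b = some b')
    (hTrank : ∀ t ∈ T, ∀ b b' c c' : B, t b = some c → t b' = some c' → c = c') :
    -- if `T` consists of total maps then `S` is simple
    ((∀ t ∈ T, ∀ b : B, (t b).isSome) →
      ∀ I : Set (B → Option (B × G)), I ⊆ wreathSet G T → I.Nonempty →
        (∀ a ∈ I, ∀ s ∈ wreathSet G T, mmul a s ∈ I ∧ mmul s a ∈ I) →
        I = wreathSet G T) ∧
    -- otherwise `S` is `0`-simple
    ((¬ ∀ t ∈ T, ∀ b : B, (t b).isSome) →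
      zeroMat B G ∈ wreathSet G T ∧
      (∃ a ∈ wreathSet G T, ∃ a' ∈ wreathSet G T, mmul a a' ≠ zeroMat B G) ∧
      (∀ I : Set (B → Option (B × G)), I ⊆ wreathSet G T → I.Nonempty →
        (∀ a ∈ I, ∀ s ∈ wreathSet G T, mmul a s ∈ I ∧ mmul s a ∈ I) →
        I = {zeroMat B G} ∨ I = wreathSet G T)) ∧
    -- the maximal subgroup at a non-zero idempotent `e` with image of `π(e)`
    -- equal to `{b}` is isomorphic to `G` via the `(b,b)`-entry map `ψ`
    (∀ e ∈ wreathSet G T, e ≠ zeroMat B G → mmul e e = e → ∀ b : B,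
      (∀ b₀ : B, ∀ p : B × G, e b₀ = some p → p.1 = b) →
      -- `ψ` is well defined: every element of `G_e` has a `(b,b)`-entry
      (∀ s ∈ HClassW (wreathSet G T) e, ∃ g : G, s b = some (b, g)) ∧
      -- `ψ` is multiplicative
      (∀ s ∈ HClassW (wreathSet G T) e, ∀ t' ∈ HClassW (wreathSet G T) e,
        ∀ gs gt : G, s b = some (b, gs) → t' b = some (b, gt) →
          mmul s t' b = some (b, gs * gt)) ∧
      -- `ψ` is injective
      (∀ s ∈ HClassW (wreathSet G T) e, ∀ t' ∈ HClassW (wreathSet G T) e,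
        ∀ g : G, s b = some (b, g) → t' b = some (b, g) → s = t') ∧
      -- `ψ` is surjective
      (∀ g : G, ∃ s ∈ HClassW (wreathSet G T) e, s b = some (b, g))) :=
  wreath_simple_and_maximal_subgroup_general T hTmul hTtrans hTrank
end

section
/- Let u ∈ X⁺ be a primitive word. Then, for any integer m > 0 and any words x,y ∈ X*, one has x uᵐ y ∈ u⁺ if and only if x ∈ u* and y ∈ u*. -/
/-- The `n`-th power (concatenation) of a word. -/
def wordPow {X : Type*} (n : ℕ) (u : List X) : List X := (List.replicate n u).flatten

/-- A non-empty word is primitive if it is not a proper power of another word. -/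
def IsPrimitiveWord {X : Type*} (u : List X) : Prop :=
  u ≠ [] ∧ ∀ v : List X, ∀ k : ℕ, 2 ≤ k → u ≠ wordPow k v

lemma wordPow_zero {X : Type*} (u : List X) : wordPow 0 u = [] := rfl

lemma wordPow_succ {X : Type*} (n : ℕ) (u : List X) :
    wordPow (n + 1) u = u ++ wordPow n u := by
  simp [wordPow, List.replicate_succ]

lemma wordPow_one {X : Type*} (u : List X) : wordPow 1 u = u := by
  simp [wordPow]

lemma wordPow_add {X : Type*} (m n : ℕ) (u : List X) :
    wordPow (m + n) u = wordPow m u ++ wordPow n u := by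
  unfold wordPow
  rw [List.replicate_add, List.flatten_append]

lemma wordPow_length {X : Type*} (n : ℕ) (u : List X) :
    (wordPow n u).length = n * u.length := by
  simp [wordPow, Nat.mul_comm]

/-- Commuting words are powers of a common word (Lyndon–Schützenberger). -/
lemma comm_aux {X : Type*} : ∀ N : ℕ, ∀ a b : List X,
    a.length + b.length ≤ N → a.length ≤ b.length → a ++ b = b ++ a →
    ∃ w k l, a = wordPow k w ∧ b = wordPow l w := by
  intro N
  induction N with
  | zero =>
    intro a b hN _ _
    have ha : a = [] := List.eq_nil_of_length_eq_zero (by omega)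
    exact ⟨b, 0, 1, by simp [ha, wordPow_zero], by simp [wordPow_one]⟩
  | succ N ih =>
    intro a b hN hab hcomm
    rcases eq_or_ne a [] with ha | ha
    · exact ⟨b, 0, 1, by simp [ha, wordPow_zero], by simp [wordPow_one]⟩
    · have hlen : 0 < a.length := List.length_pos_iff.mpr ha
      have h1 : a <+: b ++ a := hcomm ▸ ⟨b, rfl⟩
      have hpre : a <+: b :=
        List.prefix_of_prefix_length_le h1 ⟨a, rfl⟩ hab
      obtain ⟨c, hc⟩ := hpre
      have hac : a ++ c = c ++ a := by
        have : a ++ (a ++ c) = (a ++ c) ++ a := by rw [hc]; exact hcomm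
        have := this
        rw [List.append_assoc] at this
        exact List.append_cancel_left this
      have hclen : a.length + c.length ≤ N := by
        have := congrArg List.length hc
        simp at this
        omega
      rcases le_or_gt a.length c.length with hle | hlt
      · obtain ⟨w, k, l, hw1, hw2⟩ := ih a c hclen hle hac
        exact ⟨w, k, k + l, hw1, by rw [← hc, wordPow_add, hw1, hw2]⟩
      · obtain ⟨w, k, l, hw1, hw2⟩ := ih c a (by omega) hlt.le hac.symm
        exact ⟨w, l, l + k, hw2, by rw [← hc, wordPow_add, hw1, hw2]⟩

lemma comm_pow {X : Type*} (a b : List X) (hcomm : a ++ b = b ++ a) :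
    ∃ w k l, a = wordPow k w ∧ b = wordPow l w := by
  rcases le_or_gt a.length b.length with h | h
  · exact comm_aux (a.length + b.length) a b le_rfl h hcomm
  · obtain ⟨w, k, l, h1, h2⟩ :=
      comm_aux (b.length + a.length) b a le_rfl h.le hcomm.symm
    exact ⟨w, l, k, h2, h1⟩

/-- A primitive word is not a nontrivial "conjugate equality". -/
lemma primitive_no_overlap {X : Type*} {u a b : List X} (hu : IsPrimitiveWord u)
    (h1 : u = a ++ b) (h2 : u = b ++ a) (ha : a ≠ []) (hb : b ≠ []) : False := by
  obtain ⟨w, k, l, hw1, hw2⟩ := comm_pow a b (by rw [← h1, ← h2])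
  have hk : 1 ≤ k := by
    by_contra h
    apply ha
    interval_cases k
    exact hw1
  have hl : 1 ≤ l := by
    by_contra h
    apply hb
    interval_cases l
    exact hw2
  exact hu.2 w (k + l) (by omega) (by rw [h1, hw1, hw2, ← wordPow_add])

lemma prefix_pow_aux {X : Type*} {u : List X} (hu : IsPrimitiveWord u) :
    ∀ N : ℕ, ∀ x : List X, x.length ≤ N → ∀ n : ℕ,
    (x ++ u) <+: wordPow n u → ∃ q, x = wordPow q u := by
  have hulen : 0 < u.length := List.length_pos_iff.mpr hu.1
  intro N
  induction N with
  | zero =>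
    intro x hx n _
    exact ⟨0, List.eq_nil_of_length_eq_zero (by omega)⟩
  | succ N ih =>
    intro x hx n hpre
    rcases eq_or_ne x [] with hxe | hxe
    · exact ⟨0, hxe⟩
    have hxlen : 0 < x.length := List.length_pos_iff.mpr hxe
    -- n ≥ 1
    have hlenle : x.length + u.length ≤ n * u.length := by
      have := hpre.length_le
      simpa [wordPow_length] using this
    obtain ⟨n', rfl⟩ : ∃ n', n = n' + 1 := by
      cases n with
      | zero => omega
      | succ n' => exact ⟨n', rfl⟩
    rw [wordPow_succ] at hpre
    rcases le_or_gt u.length x.length with hle | hlt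
    · -- u is a prefix of x
      have hxp : x <+: u ++ wordPow n' u := ((List.prefix_append x u).trans hpre)
      have hup : u <+: u ++ wordPow n' u := ⟨wordPow n' u, rfl⟩
      have hux : u <+: x := List.prefix_of_prefix_length_le hup hxp hle
      obtain ⟨x', hxeq⟩ := hux
      have hx' : x'.length ≤ N := by
        have := congrArg List.length hxeq
        simp at this
        omega
      subst hxeq
      have hpre' : x' ++ u <+: wordPow n' u := by
        obtain ⟨t, ht⟩ := hpre
        refine ⟨t, ?_⟩
        have := ht
        simp only [List.append_assoc] at this ⊢
        exact List.append_cancel_left this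
      obtain ⟨q, hq⟩ := ih x' hx' n' hpre'
      exact ⟨q + 1, by rw [wordPow_succ, hq]⟩
    · -- 0 < x.length < u.length : derive contradiction with primitivity
      exfalso
      have hxp : x <+: u ++ wordPow n' u := ((List.prefix_append x u).trans hpre)
      have hup : u <+: u ++ wordPow n' u := ⟨wordPow n' u, rfl⟩
      have hxu : x <+: u := List.prefix_of_prefix_length_le hxp hup hlt.le
      obtain ⟨b, hb⟩ := hxu
      have hblen : b.length = u.length - x.length := by
        have := congrArg List.length hb
        simp at this
        omega
      -- u <+: b ++ wordPow n' u
      have hu2 : u <+: b ++ wordPow n' u := by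
        obtain ⟨t, ht⟩ := hpre
        refine ⟨t, ?_⟩
        have key : x ++ (u ++ t) = x ++ (b ++ wordPow n' u) := by
          rw [← List.append_assoc, ht, ← hb, List.append_assoc]
        exact List.append_cancel_left key
      -- b <+: u
      have hbu : b <+: u :=
        List.prefix_of_prefix_length_le ⟨wordPow n' u, rfl⟩ hu2 (by omega)
      obtain ⟨a, hba⟩ := hbu
      have halen : a.length = x.length := by
        have := congrArg List.length hba
        simp at this
        omega
      -- a <+: wordPow n' u
      have ha2 : a <+: wordPow n' u := by
        obtain ⟨t, ht⟩ := hu2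
        refine ⟨t, ?_⟩
        have key : b ++ (a ++ t) = b ++ wordPow n' u := by
          rw [← List.append_assoc, hba, ht]
        exact List.append_cancel_left key
      -- n' ≥ 1
      obtain ⟨n'', rfl⟩ : ∃ n'', n' = n'' + 1 := by
        cases n' with
        | zero =>
          exfalso
          have := ha2.length_le
          simp [wordPow_zero] at this
          omega
        | succ n'' => exact ⟨n'', rfl⟩
      rw [wordPow_succ] at ha2
      have hau : a <+: u :=
        List.prefix_of_prefix_length_le ha2 ⟨wordPow n'' u, rfl⟩ (by omega)
      -- a = x (both prefixes of u of the same length)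
      have hax : a = x := by
        have h1 : a <+: x := List.prefix_of_prefix_length_le hau (⟨b, hb⟩ : x <+: u)
          (by omega)
        exact h1.eq_of_length (by omega)
      rw [hax] at hba
      exact primitive_no_overlap hu hb.symm hba.symm hxe
        (by intro h; rw [h] at hblen; simp at hblen; omega)

/-- If `u` is a primitive word, then for `m > 0` and words `x, y`, one has
`x uᵐ y ∈ u⁺` if and only if `x ∈ u*` and `y ∈ u*`. -/
theorem primitive_power_factorization {X : Type*} (u : List X)
    (hu : IsPrimitiveWord u) (m : ℕ) (hm : 0 < m) (x y : List X) :
    (∃ n : ℕ, 1 ≤ n ∧ x ++ wordPow m u ++ y = wordPow n u) ↔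
      (∃ n : ℕ, x = wordPow n u) ∧ (∃ n : ℕ, y = wordPow n u) := by
  have hulen : 0 < u.length := List.length_pos_iff.mpr hu.1
  constructor
  · rintro ⟨n, hn, h⟩
    obtain ⟨m', rfl⟩ : ∃ m', m = m' + 1 := ⟨m - 1, by omega⟩
    have hpre : (x ++ u) <+: wordPow n u := by
      refine ⟨wordPow m' u ++ y, ?_⟩
      rw [← h, wordPow_succ]
      simp [List.append_assoc]
    obtain ⟨q, hq⟩ := prefix_pow_aux hu x.length x le_rfl n hpre
    refine ⟨⟨q, hq⟩, ?_⟩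
    rw [hq, ← wordPow_add] at h
    have hle : q + (m' + 1) ≤ n := by
      have := congrArg List.length h
      simp [wordPow_length] at this
      nlinarith
    refine ⟨n - (q + (m' + 1)), ?_⟩
    have : wordPow (q + (m' + 1)) u ++ wordPow (n - (q + (m' + 1))) u = wordPow n u := by
      rw [← wordPow_add]
      congr 1
      omega
    rw [← this] at h
    exact List.append_cancel_left h
  · rintro ⟨⟨a, rfl⟩, ⟨b, rfl⟩⟩
    exact ⟨a + m + b, by omega, by rw [wordPow_add, wordPow_add]⟩
end

section
/- Let L ⊆ X⁺ be a rational language recognized by a deterministic finite automaton with m states, and let φ : X⁺ → S be a homomorphism to a finite semigroup S. Then every element of φ(L) can be represented by a word in L of length at most m(|S|+1) − 1; that is, for each s ∈ φ(L) there exists w ∈ L with φ(w) = s and |w| ≤ m(|S|+1) − 1. -/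
/-!
Pair the automaton with the semigroup: reading a word `w`, the automaton `M.withImage φ` keeps
track of the state `M.eval w` together with `φ w` (or a marker for the empty word), so it has
`m (|S| + 1)` states. In any automaton with `n` states, every reachable state is reached by a word
of length less than `n`, since a longer run repeats a state and the loop in between can be cut out.
A short word reaching the state of `w` in the paired automaton lies in `L` and has the same image.
-/

namespace DFA

variable {α σ : Type*} (M : DFA α σ)

theorem exists_evalFrom_eq_length_lt_card [Fintype σ] (s : σ) (x : List α) :
    ∃ y, M.evalFrom s y = M.evalFrom s x ∧ y.length < Fintype.card σ := by
  by_cases hlen : x.length < Fintype.card σ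
  · exact ⟨x, rfl, hlen⟩
  obtain ⟨q, a, b, c, rfl, -, hb, rfl, hloop, -⟩ := M.evalFrom_split (not_lt.1 hlen) rfl
  obtain ⟨y, hy, hylen⟩ := exists_evalFrom_eq_length_lt_card s (a ++ c)
  refine ⟨y, ?_, hylen⟩
  rw [hy, evalFrom_of_append, evalFrom_of_append, evalFrom_of_append, hloop]
termination_by x.length
decreasing_by
  subst_vars
  simp only [List.length_append]
  have := List.length_pos_iff.2 hb
  omega

end DFA

section OptionImage

variable {α S : Type*} (φ : List α → S)

def optionImage (w : List α) : Option S := if w = [] then none else some (φ w)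

theorem optionImage_append_singleton [Semigroup S]
    (hφ : ∀ u v : List α, u ≠ [] → v ≠ [] → φ (u ++ v) = φ u * φ v) (w : List α) (a : α) :
    optionImage φ (w ++ [a]) = some ((optionImage φ w).elim (φ [a]) (· * φ [a])) := by
  rcases eq_or_ne w [] with rfl | hw
  · simp [optionImage]
  · simp [optionImage, hw, hφ w [a] hw]

theorem eq_of_optionImage_eq {v w : List α} (h : optionImage φ v = optionImage φ w) :
    φ v = φ w := by
  unfold optionImage at h
  split_ifs at h with hv hw
  · rw [hv, hw]
  · exact Option.some_injective S h

end OptionImage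

namespace DFA

variable {α σ S : Type*} (M : DFA α σ) (φ : List α → S)

def withImage [Mul S] : DFA α (σ × Option S) where
  step p a := (M.step p.1 a, some (p.2.elim (φ [a]) (· * φ [a])))
  start := (M.start, none)
  accept := Prod.fst ⁻¹' M.accept

theorem eval_withImage [Semigroup S]
    (hφ : ∀ u v : List α, u ≠ [] → v ≠ [] → φ (u ++ v) = φ u * φ v) (w : List α) :
    (M.withImage φ).eval w = (M.eval w, optionImage φ w) := by
  induction w using List.reverseRecOn with
  | nil => rfl
  | append_singleton w a ih =>
    rw [eval_append_singleton, eval_append_singleton, ih, optionImage_append_singleton φ hφ]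
    rfl

end DFA

theorem short_representative_of_rational_general {X : Type*} {σ : Type*} [Fintype σ]
    (M : DFA X σ) (L : Language X) (hL : M.accepts = L)
    {S : Type*} [Semigroup S] [Fintype S] (φ : List X → S)
    (hφ : ∀ u v : List X, u ≠ [] → v ≠ [] → φ (u ++ v) = φ u * φ v)
    (s : S) (hs : ∃ w ∈ L, φ w = s) :
    ∃ w ∈ L, φ w = s ∧ w.length ≤ Fintype.card σ * (Fintype.card S + 1) - 1 := by
  obtain ⟨w, hw, rfl⟩ := hs
  subst hL
  obtain ⟨v, hv, hlen⟩ :=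
    (M.withImage φ).exists_evalFrom_eq_length_lt_card (M.withImage φ).start w
  change (M.withImage φ).eval v = (M.withImage φ).eval w at hv
  obtain ⟨hstate, himage⟩ : M.eval v = M.eval w ∧ optionImage φ v = optionImage φ w := by
    simpa only [DFA.eval_withImage M φ hφ, Prod.mk.injEq] using hv
  refine ⟨v, ?_, eq_of_optionImage_eq φ himage, ?_⟩
  · rwa [DFA.mem_accepts, hstate]
  · rw [Fintype.card_prod, Fintype.card_option] at hlen
    omega

/-- If `L ⊆ X⁺` is recognized by a DFA with `m` states and `φ : X⁺ → S` is a
homomorphism to a finite semigroup, then every element of `φ(L)` is represented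
by a word in `L` of length at most `m(|S|+1) - 1`. -/
theorem short_representative_of_rational {X : Type*} {σ : Type*} [Fintype σ]
    (M : DFA X σ) (L : Language X) (hL : M.accepts = L) (hne : ∀ w ∈ L, w ≠ [])
    {S : Type*} [Semigroup S] [Fintype S] (φ : List X → S)
    (hφ : ∀ u v : List X, u ≠ [] → v ≠ [] → φ (u ++ v) = φ u * φ v)
    (s : S) (hs : ∃ w ∈ L, φ w = s) :
    ∃ w ∈ L, φ w = s ∧ w.length ≤ Fintype.card σ * (Fintype.card S + 1) - 1 :=
  short_representative_of_rational_general M L hL φ hφ s hs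
end

section
/- Let S be a compact semigroup and let A ⊆ S be a closed, non-empty, factorial, irreducible subset with apex J(A). Then an element u ∈ A belongs to J(A) if and only if every element of A is a factor of u. -/
lemma IsFactor.mul_left {S : Type*} [Semigroup S] {w v : S} (x : S)
    (h : IsFactor w v) : IsFactor w (x * v) := by
  obtain rfl | ⟨p, rfl⟩ | ⟨q, rfl⟩ | ⟨p, q, rfl⟩ := h
  · exact Or.inr (Or.inl ⟨x, rfl⟩)
  · exact Or.inr (Or.inl ⟨x * p, by rw [mul_assoc]⟩)
  · exact Or.inr (Or.inr (Or.inr ⟨x, q, (mul_assoc x w q).symm⟩))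
  · exact Or.inr (Or.inr (Or.inr ⟨x * p, q, by simp [mul_assoc]⟩))

lemma IsFactor.mul_right {S : Type*} [Semigroup S] {w v : S} (y : S)
    (h : IsFactor w v) : IsFactor w (v * y) := by
  obtain rfl | ⟨p, rfl⟩ | ⟨q, rfl⟩ | ⟨p, q, rfl⟩ := h
  · exact Or.inr (Or.inr (Or.inl ⟨y, rfl⟩))
  · exact Or.inr (Or.inr (Or.inr ⟨p, y, rfl⟩))
  · exact Or.inr (Or.inr (Or.inl ⟨q * y, mul_assoc w q y⟩))
  · exact Or.inr (Or.inr (Or.inr ⟨p, q * y, by simp [mul_assoc]⟩))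

lemma IsFactor.trans {S : Type*} [Semigroup S] {w v u : S}
    (h1 : IsFactor w v) (h2 : IsFactor v u) : IsFactor w u := by
  obtain rfl | ⟨x, rfl⟩ | ⟨y, rfl⟩ | ⟨x, y, rfl⟩ := h2
  · exact h1
  · exact h1.mul_left x
  · exact h1.mul_right y
  · exact (h1.mul_left x).mul_right y

/-- Characterization of the apex: an element `u` of a closed, non-empty,
factorial, irreducible subset `A` of a compact semigroup belongs to the apex
`J(A)` (here: the `J`-class of an element `a ∈ A` whose `J`-class is minimal in
`A`) if and only if every element of `A` is a factor of `u`. -/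
theorem mem_apex_iff_all_factors {S : Type*} [Semigroup S] [Nonempty S]
    [TopologicalSpace S] [CompactSpace S] [T2Space S] [ContinuousMul S]
    (A : Set S) (hclosed : IsClosed A) (hne : A.Nonempty)
    (hfac : IsFactorialSet A) (hirr : IsIrreducibleSet A)
    (a : S) (ha : a ∈ A) (hmin : ∀ v ∈ A, JLe v a → JEq v a) :
    ∀ u ∈ A, (u ∈ JClass a ↔ ∀ v ∈ A, IsFactor v u) := by
  intro u hu
  constructor
  · rintro ⟨hua, hau⟩ v hv
    obtain ⟨w, hw⟩ := hirr u hu v hv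
    have hvt : IsFactor v (u * w * v) := Or.inr (Or.inl ⟨u * w, rfl⟩)
    have hut : IsFactor u (u * w * v) :=
      Or.inr (Or.inr (Or.inl ⟨w * v, by rw [mul_assoc]⟩))
    have hta : JLe (u * w * v) a := IsFactor.trans hua hut
    have hat : JLe a (u * w * v) := (hmin _ hw hta).2
    exact IsFactor.trans (IsFactor.trans hvt hat) hua
  · intro h
    exact hmin u hu (h a ha)
end
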